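/- arXiv:1408.3204 — 11 statements merged into one kernel-verified Lean document; each statement's English description precedes it below -/
import Mathlib

section
/- For every graph G with at least one non-adjacent pair of vertices and every edge e added between two non-adjacent vertices, mp(G+e) ≤ 3·mp(G), where mp denotes the number of vertices on a longest degree monotone path. -/
/-!
Cut a degree monotone path of `G + uv` in front of `u` and in front of `v`. None of the at most
three pieces uses the edge `uv`, and each meets `{u, v}` at most in its first vertex. Degrees in `G`
and `G + uv` agree off `{u, v}` and are smaller in `G` at `u` and `v`, so every nondecreasing piece
is still a nondecreasing path of `G`.
-/

open SimpleGraph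

/-- `mp G` is the maximum number of vertices of a degree monotone path in `G`. -/
noncomputable def mp {V : Type*} [Fintype V] (G : SimpleGraph V) : ℕ :=
  letI : DecidableEq V := Classical.decEq _
  letI : DecidableRel G.Adj := Classical.decRel _
  sSup {n : ℕ | ∃ (u v : V) (p : G.Walk u v), p.IsPath ∧
    (List.Chain' (· ≤ ·) (p.support.map (fun x => G.degree x)) ∨
     List.Chain' (· ≥ ·) (p.support.map (fun x => G.degree x))) ∧ p.support.length = n}

namespace List

variable {α : Type*}

theorem length_le_countP_add_one_mul (p : α → Prop) [DecidablePred p] {M : ℕ} {l : List α}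
    (h : ∀ t, t <:+: l → (∀ x ∈ t.tail, ¬ p x) → t.length ≤ M) :
    l.length ≤ (l.countP p + 1) * M := by
  suffices key : ∀ r c : List α, (∀ x ∈ c.tail, ¬ p x) →
      (∀ t, t <:+: c ++ r → (∀ x ∈ t.tail, ¬ p x) → t.length ≤ M) →
      (c ++ r).length ≤ (r.countP p + 1) * M by
    cases l with
    | nil => simp
    | cons a l =>
      calc (a :: l).length ≤ (l.countP p + 1) * M := key l [a] (by simp) h
        _ ≤ ((a :: l).countP p + 1) * M := by gcongr; simp only [countP_cons]; omega
  -- `c` is the piece under construction, `r` the part of the list not yet read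
  intro r
  induction r with
  | nil => intro c hc h; simpa using h c (by simp) hc
  | cons b r ih =>
    intro c hc h
    by_cases hb : p b
    · -- cut in front of `b`
      have hc' : c.length ≤ M := h c (prefix_append c _).isInfix hc
      have hr : ([b] ++ r).length ≤ (r.countP p + 1) * M :=
        ih [b] (by simp) fun t ht => h t (ht.trans (suffix_append c _).isInfix)
      simp only [length_append, length_cons, length_nil, countP_cons, hb, decide_true,
        if_true] at hr ⊢
      nlinarith
    · have hcb : ∀ x ∈ (c ++ [b]).tail, ¬ p x := by
        cases c with
        | nil => simp
        | cons a c => simpa [or_imp, forall_and, hb] using hc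
      simpa [hb] using ih (c ++ [b]) hcb (by simpa using h)

theorem Nodup.countP_mem_le_card [DecidableEq α] {l : List α} (hl : l.Nodup) (S : Finset α) :
    l.countP (· ∈ S) ≤ S.card := by
  rw [countP_eq_length_filter, ← toFinset_card_of_nodup (hl.filter _)]
  exact Finset.card_le_card fun x hx => (by simpa using hx : x ∈ l ∧ x ∈ S).2

end List

section

variable {V : Type*} [Fintype V]

theorem length_le_mp {G : SimpleGraph V} [DecidableRel G.Adj] {l : List V} (hnd : l.Nodup)
    (hadj : l.IsChain G.Adj) (hmono : (l.map fun x => G.degree x).IsChain (· ≤ ·)) :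
    l.length ≤ mp G := by
  rcases eq_or_ne l [] with rfl | hne
  · simp
  classical
  let p := Walk.ofSupport l hne hadj
  refine le_csSup ⟨Fintype.card V, ?_⟩ ⟨_, _, p, ?_, Or.inl ?_, by simp [p]⟩
  · rintro _ ⟨_, _, q, hq, -, rfl⟩
    exact hq.support_nodup.length_le_card
  · simpa [Walk.isPath_def, p] using hnd
  · unfold List.Chain'
    convert hmono
    simp [p]

theorem mp_le_of_forall_length_le {G : SimpleGraph V} [DecidableRel G.Adj] {n : ℕ}
    (h : ∀ l : List V, l.Nodup → l.IsChain G.Adj → (l.map fun x => G.degree x).IsChain (· ≤ ·) →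
      l.length ≤ n) :
    mp G ≤ n := by
  classical
  refine csSup_le' ?_
  rintro _ ⟨_, _, p, hp, hmono | hmono, rfl⟩
  · exact h _ hp.support_nodup p.isChain_adj_support (by unfold List.Chain' at hmono; convert hmono)
  · rw [← List.length_reverse]
    refine h _ (List.nodup_reverse.2 hp.support_nodup) ?_ ?_
    · exact List.isChain_reverse.2 (p.isChain_adj_support.imp fun _ _ h => h.symm)
    · rw [List.map_reverse, List.isChain_reverse]
      unfold List.Chain' at hmono
      convert hmono

theorem degree_eq_of_notMem {G G' : SimpleGraph V} [DecidableRel G.Adj] [DecidableRel G'.Adj]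
    {S : Finset V} (hle : G ≤ G') (hS : ∀ ⦃a b⦄, G'.Adj a b → G.Adj a b ∨ a ∈ S ∧ b ∈ S)
    {x : V} (hx : x ∉ S) :
    G'.degree x = G.degree x := by
  simp only [← card_neighborFinset_eq_degree]
  congr 1
  ext y
  simp only [mem_neighborFinset]
  exact ⟨fun h => (hS h).resolve_right fun h' => hx h'.1, fun h => hle h⟩

theorem length_le_mp_of_forall_notMem {G G' : SimpleGraph V} [DecidableRel G.Adj]
    [DecidableRel G'.Adj] {S : Finset V} (hle : G ≤ G')
    (hS : ∀ ⦃a b⦄, G'.Adj a b → G.Adj a b ∨ a ∈ S ∧ b ∈ S) {a : V} {l : List V}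
    (hl : ∀ x ∈ l, x ∉ S) (hnd : (a :: l).Nodup) (hadj : (a :: l).IsChain G'.Adj)
    (hmono : ((a :: l).map fun x => G'.degree x).IsChain (· ≤ ·)) :
    (a :: l).length ≤ mp G := by
  refine length_le_mp hnd ?_ ?_
  · refine hadj.imp_of_mem_tail_imp fun x y _ hy hxy => ?_
    exact (hS hxy).resolve_right fun h => hl y hy h.2
  · have htail : (l.map fun x => G.degree x) = l.map fun x => G'.degree x :=
      List.map_congr_left fun x hx => (degree_eq_of_notMem hle hS (hl x hx)).symm
    rw [List.map_cons, List.isChain_cons] at hmono ⊢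
    rw [htail]
    exact ⟨fun y hy => (degree_le_of_le hle).trans (hmono.1 y hy), hmono.2⟩

theorem mp_le_card_add_one_mul {G G' : SimpleGraph V} (S : Finset V) (hle : G ≤ G')
    (hS : ∀ ⦃a b⦄, G'.Adj a b → G.Adj a b ∨ a ∈ S ∧ b ∈ S) :
    mp G' ≤ (S.card + 1) * mp G := by
  classical
  refine mp_le_of_forall_length_le fun l hnd hadj hmono => ?_
  calc l.length ≤ (l.countP (· ∈ S) + 1) * mp G :=
        List.length_le_countP_add_one_mul _ fun t ht htS => ?_
    _ ≤ (S.card + 1) * mp G := by gcongr; exact hnd.countP_mem_le_card S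
  cases t with
  | nil => simp
  | cons a t =>
    exact length_le_mp_of_forall_notMem hle hS (by simpa using htS) (ht.nodup hnd)
      (hadj.infix ht) (hmono.infix (ht.map _))

end

theorem mp_add_edge_le_general {V : Type*} [Fintype V] (G : SimpleGraph V) (u v : V) :
    mp (G ⊔ fromEdgeSet {s(u, v)}) ≤ 3 * mp G := by
  classical
  calc mp (G ⊔ fromEdgeSet {s(u, v)}) ≤ (({u, v} : Finset V).card + 1) * mp G :=
        mp_le_card_add_one_mul {u, v} le_sup_left fun a b h => ?_
    _ ≤ 3 * mp G := by gcongr; exact Nat.add_le_add_right Finset.card_le_two 1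
  rcases h with h | ⟨h, -⟩
  · exact Or.inl h
  · right
    rcases Sym2.eq_iff.1 h with ⟨rfl, rfl⟩ | ⟨rfl, rfl⟩ <;> simp

theorem mp_add_edge_le {V : Type*} [Fintype V] (G : SimpleGraph V) (u v : V)
    (hne : u ≠ v) (hna : ¬ G.Adj u v) :
    mp (G ⊔ fromEdgeSet {s(u, v)}) ≤ 3 * mp G :=
  mp_add_edge_le_general G u v
end

section
/- For every graph G and every edge e of G, mp(G−e) ≤ 3·mp(G) − 1, where mp denotes the number of vertices on a longest degree monotone path. -/
/-!
Deleting the edge `uv` lowers the degrees of `u` and `v` by one and leaves all other degrees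
unchanged. Let `P` be a path of `G - uv` along which the degree is non-decreasing (reverse it if
it is non-increasing), and say it meets `u` before `v`: `P = A u B v C`. Measured in `G`, the
degree is still non-decreasing along `A u v`, `B v` and `C`, and `A u v` is a path of `G` thanks
to the edge `uv`. Hence `|A| + 2`, `|B| + 1` and `|C|` are at most `mp G`, so
`|P| ≤ 3 mp(G) - 1`. If `P` meets at most one of `u`, `v`, a single cut gives `|P| ≤ 2 mp(G)`.
-/

open SimpleGraph

namespace SimpleGraph

variable {V : Type*} {G H : SimpleGraph V}

lemma neighborFinset_deleteEdges_singleton [DecidableEq V] {x y : V}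
    [Fintype (G.neighborSet x)] [Fintype ((G.deleteEdges {s(x, y)}).neighborSet x)] :
    (G.deleteEdges {s(x, y)}).neighborFinset x = (G.neighborFinset x).erase y := by
  ext z
  simp only [mem_neighborFinset, deleteEdges_adj, Set.mem_singleton_iff, Sym2.congr_right,
    Finset.mem_erase]
  tauto

lemma degree_deleteEdges_singleton_add_one {e : Sym2 V} (he : e ∈ G.edgeSet) {x : V}
    (hx : x ∈ e)
    [Fintype (G.neighborSet x)] [Fintype ((G.deleteEdges {e}).neighborSet x)] :
    (G.deleteEdges {e}).degree x + 1 = G.degree x := by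
  classical
  obtain ⟨y, rfl⟩ := Sym2.mem_iff_exists.1 hx
  rw [← card_neighborFinset_eq_degree, neighborFinset_deleteEdges_singleton]
  exact Finset.card_erase_add_one ((mem_neighborFinset _ _ _).2 he)

lemma degree_deleteEdges_singleton_of_notMem {e : Sym2 V} {x : V} (hx : x ∉ e)
    [Fintype (G.neighborSet x)] [Fintype ((G.deleteEdges {e}).neighborSet x)] :
    (G.deleteEdges {e}).degree x = G.degree x := by
  simp only [← card_neighborFinset_eq_degree]
  congr 1
  ext y
  simp only [mem_neighborFinset, deleteEdges_adj, Set.mem_singleton_iff, and_iff_left_iff_imp]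
  rintro - rfl
  exact hx (Sym2.mem_mk_left x y)

def IsMonotonePath (G : SimpleGraph V) (f : V → ℕ) (l : List V) : Prop :=
  l.IsChain G.Adj ∧ l.Nodup ∧ l.Pairwise (f · ≤ f ·)

lemma IsMonotonePath.infix {f : V → ℕ} {l l' : List V} (hl : IsMonotonePath H f l)
    (hHG : H ≤ G) (h : l' <:+: l) : IsMonotonePath G f l' :=
  ⟨(hl.1.infix h).imp fun _ _ hxy => hHG hxy, hl.2.1.sublist h.sublist,
    hl.2.2.sublist h.sublist⟩

lemma IsMonotonePath.congr {f g : V → ℕ} {l : List V} (hl : IsMonotonePath G f l)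
    (h : ∀ x ∈ l, g x = f x) : IsMonotonePath G g l :=
  ⟨hl.1, hl.2.1, hl.2.2.imp_of_mem fun hx hy hxy => by rwa [h _ hx, h _ hy]⟩

lemma IsMonotonePath.raise {f g : V → ℕ} {l₁ l₂ : List V}
    (hl : IsMonotonePath G f (l₁ ++ l₂)) (h₁ : ∀ x ∈ l₁, g x = f x)
    (h₂ : ∀ x ∈ l₂, g x = f x + 1) : IsMonotonePath G g (l₁ ++ l₂) := by
  obtain ⟨hchain, hnd, hmono⟩ := hl
  refine ⟨hchain, hnd, ?_⟩
  obtain ⟨hmono₁, hmono₂, hmono₁₂⟩ := List.pairwise_append.1 hmono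
  refine List.pairwise_append.2 ⟨?_, ?_, ?_⟩
  · exact hmono₁.imp_of_mem fun hx hy hxy => by rwa [h₁ _ hx, h₁ _ hy]
  · exact hmono₂.imp_of_mem fun hx hy hxy => by rw [h₂ _ hx, h₂ _ hy]; omega
  · intro x hx y hy
    rw [h₁ x hx, h₂ y hy]
    exact (hmono₁₂ x hx y hy).trans (Nat.le_succ _)

section DeleteEdge

variable {d d' : V → ℕ} {u v : V} {m : ℕ}

lemma IsMonotonePath.length_add_one_le_of_append_cons (hHG : H ≤ G) (huv : G.Adj u v)
    (hu : d u = d' u + 1) (hv : d v = d' v + 1) (hd : ∀ x, x ≠ u → x ≠ v → d x = d' x)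
    (hm : ∀ l, IsMonotonePath G d l → l.length ≤ m) {A R : List V}
    (hl : IsMonotonePath H d' (A ++ u :: R)) (hvA : v ∉ A) :
    (A ++ u :: R).length + 1 ≤ 3 * m := by
  have hnd := hl.2.1
  by_cases hvR : v ∈ R
  · obtain ⟨B, C, rfl⟩ := List.append_of_mem hvR
    simp only [List.nodup_append, List.nodup_cons, List.mem_cons, List.mem_append] at hnd
    have hsub : (A ++ [u, v]).Sublist (A ++ u :: (B ++ v :: C)) := by simp
    have hAu : IsMonotonePath G d' (A ++ [u]) := hl.infix hHG ⟨[], B ++ v :: C, by simp⟩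
    have hAuv : IsMonotonePath G d (A ++ [u, v]) := by
      refine IsMonotonePath.raise ⟨?_, hl.2.1.sublist hsub, hl.2.2.sublist hsub⟩
        (fun x hx => hd x ?_ ?_) ?_
      · simpa using hAu.1.append (List.isChain_singleton v) (by simpa using huv)
      all_goals grind
    have hBv : IsMonotonePath G d (B ++ [v]) := by
      refine (hl.infix hHG ⟨A ++ [u], C, by simp⟩).raise (fun x hx => hd x ?_ ?_) ?_
      all_goals grind
    have hC : IsMonotonePath G d C := by
      refine (hl.infix hHG ⟨A ++ u :: B ++ [v], [], by simp⟩).congr (fun x hx => hd x ?_ ?_)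
      all_goals grind
    have hAuv_len := hm _ hAuv
    have hBv_len := hm _ hBv
    have hC_len := hm _ hC
    simp only [List.length_append, List.length_cons, List.length_nil] at hAuv_len hBv_len ⊢
    omega
  · simp only [List.nodup_append, List.nodup_cons] at hnd
    have hAu : IsMonotonePath G d (A ++ [u]) := by
      refine (hl.infix hHG ⟨[], R, by simp⟩).raise (fun x hx => hd x ?_ ?_) (by simp [hu])
      all_goals grind
    have hR : IsMonotonePath G d R := by
      refine (hl.infix hHG ⟨A ++ [u], [], by simp⟩).congr (fun x hx => hd x ?_ ?_)
      all_goals grind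
    have hAu_len := hm _ hAu
    have hR_len := hm _ hR
    simp only [List.length_append, List.length_cons, List.length_nil] at hAu_len ⊢
    omega

lemma IsMonotonePath.length_add_one_le (hHG : H ≤ G) (huv : G.Adj u v)
    (hu : d u = d' u + 1) (hv : d v = d' v + 1) (hd : ∀ x, x ≠ u → x ≠ v → d x = d' x)
    (hm : ∀ l, IsMonotonePath G d l → l.length ≤ m) {l : List V}
    (hl : IsMonotonePath H d' l) : l.length + 1 ≤ 3 * m := by
  have hd' : ∀ x, x ≠ v → x ≠ u → d x = d' x := fun x hxv hxu => hd x hxu hxv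
  by_cases hul : u ∈ l
  · obtain ⟨A, R, rfl⟩ := List.append_of_mem hul
    by_cases hvA : v ∈ A
    · obtain ⟨A₁, A₂, rfl⟩ := List.append_of_mem hvA
      have huA₁ : u ∉ A₁ := by
        have hnd := hl.2.1
        simp only [List.nodup_append, List.nodup_cons, List.mem_cons, List.mem_append] at hnd
        grind
      simpa using IsMonotonePath.length_add_one_le_of_append_cons hHG huv.symm hv hu hd' hm
        (R := A₂ ++ u :: R) (by simpa using hl) huA₁
    · exact IsMonotonePath.length_add_one_le_of_append_cons hHG huv hu hv hd hm hl hvA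
  · by_cases hvl : v ∈ l
    · obtain ⟨A, R, rfl⟩ := List.append_of_mem hvl
      exact IsMonotonePath.length_add_one_le_of_append_cons hHG huv.symm hv hu hd' hm hl
        fun h => hul (by simp [h])
    · have hm₁ : 1 ≤ m :=
        hm [u] ⟨List.isChain_singleton u, List.nodup_singleton u, List.pairwise_singleton _ u⟩
      have hl_len := hm l ((hl.infix hHG (List.infix_refl l)).congr fun x hx =>
        hd x (ne_of_mem_of_not_mem hx hul) (ne_of_mem_of_not_mem hx hvl))
      omega

end DeleteEdge

lemma IsMonotonePath.length_le_mp [Fintype V] [DecidableRel G.Adj] {l : List V}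
    (hl : IsMonotonePath G (G.degree ·) l) : l.length ≤ mp G := by
  rcases eq_or_ne l [] with rfl | hne
  · exact Nat.zero_le _
  unfold mp
  refine le_csSup ⟨Fintype.card V, ?_⟩
    ⟨_, _, Walk.ofSupport l hne hl.1, ?_, Or.inl ?_, by simp⟩
  · rintro _ ⟨_, _, p, hp, -, rfl⟩
    exact hp.support_nodup.length_le_card
  · simpa [Walk.isPath_def] using hl.2.1
  · rw [Walk.support_ofSupport]
    exact List.isChain_iff_pairwise.2 <| List.pairwise_map.2 <| by convert hl.2.2

lemma mp_le_of_forall [Fintype V] [DecidableRel G.Adj] {N : ℕ}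
    (h : ∀ l, IsMonotonePath G (G.degree ·) l → l.length ≤ N) : mp G ≤ N := by
  unfold mp
  refine csSup_le' ?_
  rintro _ ⟨_, _, p, hp, hmono | hmono, rfl⟩
  · refine h _ ⟨p.isChain_adj_support, hp.support_nodup, ?_⟩
    convert List.pairwise_map.1 (List.isChain_iff_pairwise.1 hmono)
  · rw [← List.length_reverse, ← Walk.support_reverse]
    refine h _ ⟨p.reverse.isChain_adj_support, hp.reverse.support_nodup, ?_⟩
    rw [Walk.support_reverse, List.pairwise_reverse]
    convert List.pairwise_map.1 (List.isChain_iff_pairwise.1 hmono)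

end SimpleGraph

theorem mp_delete_edge_le {V : Type*} [Fintype V] (G : SimpleGraph V) (u v : V)
    (he : G.Adj u v) :
    mp (G.deleteEdges {s(u, v)}) ≤ 3 * mp G - 1 := by
  classical
  refine mp_le_of_forall fun l hl => Nat.le_sub_one_of_lt <|
    hl.length_add_one_le (deleteEdges_le _) he ?_ ?_ ?_ fun l' hl' => hl'.length_le_mp
  · exact (degree_deleteEdges_singleton_add_one he (Sym2.mem_mk_left u v)).symm
  · exact (degree_deleteEdges_singleton_add_one he (Sym2.mem_mk_right u v)).symm
  · intro x hxu hxv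
    exact (degree_deleteEdges_singleton_of_notMem (by simp [hxu, hxv])).symm
end

section
/- For every graph G and every edge e added between two non-adjacent vertices, mp(G+e) ≥ (mp(G)+1)/3. -/
/-!
Orient a longest degree monotone path `P` of `G` so that degrees do not decrease along it. Adding
the edge `uv` raises the degrees of `u` and `v` by one and leaves all other degrees unchanged, so a
piece of `P` stays degree monotone in `G + uv` as long as `u` and `v` occur in it at most as its
last vertex. Cutting `P` right after `u` and right after `v` gives at most three such pieces. If
both lie on `P`, with `u` first, then `deg u ≤ deg v`, so the piece ending at `u` can be continued
along the new edge to `v`; this longer piece and the two later ones have `|P| + 1` vertices in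
total. If only one of them lies on `P`, two pieces cover `P`.
-/

open SimpleGraph

namespace SimpleGraph

variable {V : Type*} [Fintype V]

/-- Degree monotone paths as vertex lists, oriented so that the degree never decreases
(reversal takes care of the other orientation). -/
def IsDegreeMonotonePath (G : SimpleGraph V) [DecidableRel G.Adj] (l : List V) : Prop :=
  l.Nodup ∧ l.IsChain G.Adj ∧ l.Pairwise (fun a b => G.degree a ≤ G.degree b)

namespace IsDegreeMonotonePath

variable {G : SimpleGraph V} [DecidableRel G.Adj] {l l₁ l₂ : List V}

theorem singleton (x : V) : G.IsDegreeMonotonePath [x] := by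
  simp [IsDegreeMonotonePath]

theorem append_left (h : G.IsDegreeMonotonePath (l₁ ++ l₂)) : G.IsDegreeMonotonePath l₁ :=
  ⟨h.1.sublist (List.sublist_append_left _ _), h.2.1.left_of_append,
    h.2.2.sublist (List.sublist_append_left _ _)⟩

theorem append_right (h : G.IsDegreeMonotonePath (l₁ ++ l₂)) : G.IsDegreeMonotonePath l₂ :=
  ⟨h.1.sublist (List.sublist_append_right _ _), h.2.1.right_of_append,
    h.2.2.sublist (List.sublist_append_right _ _)⟩

theorem length_le_mp (h : G.IsDegreeMonotonePath l) : l.length ≤ mp G := by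
  rcases eq_or_ne l [] with rfl | hne
  · exact Nat.zero_le _
  let p := Walk.ofSupport l hne h.2.1
  have hp : p.support = l := Walk.support_ofSupport hne h.2.1
  unfold mp
  refine le_csSup ⟨Fintype.card V, ?_⟩ ⟨_, _, p, ?_, Or.inl ?_, by rw [hp]⟩
  · rintro n ⟨a, b, q, hq, -, rfl⟩
    exact hq.support_nodup.length_le_card
  · rw [Walk.isPath_def, hp]
    exact h.1
  · rw [hp]
    show List.IsChain _ _
    convert List.isChain_iff_pairwise.2 (List.pairwise_map.2 h.2.2)

end IsDegreeMonotonePath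

theorem exists_isDegreeMonotonePath_length_eq_mp [Nonempty V] (G : SimpleGraph V)
    [DecidableRel G.Adj] : ∃ l, G.IsDegreeMonotonePath l ∧ l.length = mp G := by
  unfold mp
  generalize hS : Set.ofPred _ = S
  have hmem : sSup S ∈ S := by
    subst hS
    apply Nat.sSup_mem
    · exact ⟨1, _, _, (Walk.nil : G.Walk (Classical.arbitrary V) _), Walk.IsPath.nil,
        Or.inl (List.isChain_singleton _), rfl⟩
    · refine ⟨Fintype.card V, ?_⟩
      rintro n ⟨a, b, q, hq, -, rfl⟩
      exact hq.support_nodup.length_le_card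
  subst hS
  obtain ⟨a, b, p, hp, hmono | hmono, hlen⟩ := hmem
  · refine ⟨p.support, ⟨hp.support_nodup, p.isChain_adj_support, ?_⟩, hlen⟩
    convert List.pairwise_map.1 (List.isChain_iff_pairwise.1 hmono)
  · refine ⟨p.reverse.support, ⟨hp.reverse.support_nodup, p.reverse.isChain_adj_support, ?_⟩,
      by rw [Walk.support_reverse, List.length_reverse, hlen]⟩
    rw [Walk.support_reverse, List.pairwise_reverse]
    convert List.pairwise_map.1 (List.isChain_iff_pairwise.1 hmono)

section SupEdge

variable {G : SimpleGraph V} [DecidableRel G.Adj] {u v w : V} [DecidableRel (G ⊔ edge u v).Adj]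

theorem degree_sup_edge_of_ne (hu : w ≠ u) (hv : w ≠ v) :
    (G ⊔ edge u v).degree w = G.degree w := by
  classical
  simp_rw [← card_neighborFinset_eq_degree]
  congr 1
  ext z
  simp [edge_adj, hu, hv]

theorem degree_sup_edge_left (hne : u ≠ v) (hna : ¬G.Adj u v) :
    (G ⊔ edge u v).degree u = G.degree u + 1 := by
  classical
  rw [← card_neighborFinset_eq_degree, ← card_neighborFinset_eq_degree,
    ← Finset.card_insert_of_notMem (a := v) (by simpa using hna)]
  congr 1
  ext z
  rcases eq_or_ne z v with rfl | hz <;> simp [edge_adj, *]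

theorem degree_sup_edge_right (hne : u ≠ v) (hna : ¬G.Adj u v) :
    (G ⊔ edge u v).degree v = G.degree v + 1 := by
  classical
  rw [← card_neighborFinset_eq_degree, ← card_neighborFinset_eq_degree,
    ← Finset.card_insert_of_notMem (a := u) (by simpa [adj_comm] using hna)]
  congr 1
  ext z
  rcases eq_or_ne z u with rfl | hz <;> simp [edge_adj, hne.symm, *]

end SupEdge

namespace IsDegreeMonotonePath

variable {G : SimpleGraph V} [DecidableRel G.Adj] {l : List V} {u v x : V}
  [DecidableRel (G ⊔ edge u v).Adj]

theorem sup_edge (h : G.IsDegreeMonotonePath l) (hu : u ∉ l) (hv : v ∉ l) :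
    (G ⊔ edge u v).IsDegreeMonotonePath l :=
  ⟨h.1, h.2.1.imp fun _ _ hab => le_sup_left (b := edge u v) hab,
    h.2.2.imp_of_mem fun ha hb hab => by
      rwa [degree_sup_edge_of_ne (ne_of_mem_of_not_mem ha hu) (ne_of_mem_of_not_mem ha hv),
        degree_sup_edge_of_ne (ne_of_mem_of_not_mem hb hu) (ne_of_mem_of_not_mem hb hv)]⟩

theorem sup_edge_concat (h : G.IsDegreeMonotonePath (l ++ [x])) (hu : u ∉ l) (hv : v ∉ l) :
    (G ⊔ edge u v).IsDegreeMonotonePath (l ++ [x]) := by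
  refine ⟨h.1, h.2.1.imp fun _ _ hab => le_sup_left (b := edge u v) hab, ?_⟩
  refine List.pairwise_append.2 ⟨(h.append_left.sup_edge hu hv).2.2,
    List.pairwise_singleton _ _, fun a ha b hb => ?_⟩
  rw [List.mem_singleton.1 hb,
    degree_sup_edge_of_ne (ne_of_mem_of_not_mem ha hu) (ne_of_mem_of_not_mem ha hv)]
  exact (List.pairwise_append.1 h.2.2).2.2 a ha x (List.mem_singleton_self x) |>.trans
    (degree_le_of_le le_sup_left)

theorem concat_sup_edge (hne : u ≠ v) (hna : ¬G.Adj u v) (h : G.IsDegreeMonotonePath (l ++ [u]))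
    (hu : u ∉ l) (hv : v ∉ l) (hle : G.degree u ≤ G.degree v) :
    (G ⊔ edge u v).IsDegreeMonotonePath (l ++ [u, v]) := by
  have h' := h.sup_edge_concat hu hv
  have huv : (G ⊔ edge u v).degree u ≤ (G ⊔ edge u v).degree v := by
    rw [degree_sup_edge_left hne hna, degree_sup_edge_right hne hna]
    omega
  refine ⟨?_, List.isChain_append_cons_cons.2 ⟨h'.2.1, Or.inr ?_, List.isChain_singleton v⟩,
    ?_⟩
  · simp [List.nodup_append, h.1.sublist (List.sublist_append_left _ _), hne]
    exact fun a ha => ⟨ne_of_mem_of_not_mem ha hu, ne_of_mem_of_not_mem ha hv⟩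
  · simp [edge_adj, hne]
  · rw [show l ++ [u, v] = (l ++ [u]) ++ [v] by simp, List.pairwise_append]
    refine ⟨h'.2.2, List.pairwise_singleton _ _, fun a ha b hb => ?_⟩
    rw [List.mem_singleton.1 hb]
    rcases List.mem_append.1 ha with ha | ha
    · exact ((List.pairwise_append.1 h'.2.2).2.2 a ha u (List.mem_singleton_self u)).trans huv
    · rwa [List.mem_singleton.1 ha]

theorem length_le_two_mul_mp_sup_edge {A C : List V} (h : G.IsDegreeMonotonePath (A ++ u :: C))
    (hv : v ∉ A ++ u :: C) : (A ++ u :: C).length ≤ 2 * mp (G ⊔ edge u v) := by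
  classical
  have hu : u ∉ A ++ C := (List.nodup_cons.1 (List.nodup_middle.1 h.1)).1
  simp only [List.mem_append, List.mem_cons, not_or] at hu hv
  rw [← List.singleton_append, ← List.append_assoc] at h ⊢
  have hA := (h.append_left.sup_edge_concat (v := v) hu.1 hv.1).length_le_mp
  have hC := (h.append_right.sup_edge hu.2 hv.2.2).length_le_mp
  rw [List.length_append]
  omega

theorem length_lt_three_mul_mp_sup_edge_of_append {A B C : List V} (hne : u ≠ v)
    (hna : ¬G.Adj u v)
    (h : G.IsDegreeMonotonePath (A ++ u :: (B ++ v :: C))) :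
    (A ++ u :: (B ++ v :: C)).length < 3 * mp (G ⊔ edge u v) := by
  classical
  have hu : u ∉ A ++ (B ++ v :: C) := (List.nodup_cons.1 (List.nodup_middle.1 h.1)).1
  have hv : v ∉ (A ++ u :: B) ++ C := by
    refine (List.nodup_cons.1 (List.nodup_middle.1 ?_)).1
    simpa using h.1
  simp only [List.mem_append, List.mem_cons, not_or] at hu hv
  have hsplit : A ++ u :: (B ++ v :: C) = (A ++ [u]) ++ ((B ++ [v]) ++ C) := by simp
  rw [hsplit] at h ⊢
  have hle : G.degree u ≤ G.degree v :=
    (List.pairwise_append.1 h.2.2).2.2 u (by simp) v (by simp)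
  have hAu := (h.append_left.sup_edge_concat (v := v) hu.1 hv.1.1).length_le_mp
  have hBv := (h.append_right.append_left.sup_edge_concat (u := u) hu.2.1 hv.1.2.2).length_le_mp
  have hC := (h.append_right.append_right.sup_edge hu.2.2.2 hv.2).length_le_mp
  have hAuv := (h.append_left.concat_sup_edge hne hna hu.1 hv.1.1 hle).length_le_mp
  simp only [List.length_append, List.length_cons, List.length_nil] at *
  omega

theorem length_lt_three_mul_mp_sup_edge (hne : u ≠ v) (hna : ¬G.Adj u v)
    (h : G.IsDegreeMonotonePath l) : l.length < 3 * mp (G ⊔ edge u v) := by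
  classical
  have hm : 1 ≤ mp (G ⊔ edge u v) := (singleton (G := G ⊔ edge u v) u).length_le_mp
  by_cases hu : u ∈ l <;> by_cases hv : v ∈ l
  · obtain ⟨A, R, rfl⟩ := List.append_of_mem hu
    rcases List.mem_append.1 hv with hvA | hvR
    · obtain ⟨A', B, rfl⟩ := List.append_of_mem hvA
      rw [edge_comm]
      simpa using length_lt_three_mul_mp_sup_edge_of_append (A := A') (B := B) (C := R)
        hne.symm (fun h' => hna h'.symm) (by simpa using h)
    · obtain ⟨B, C, rfl⟩ := List.append_of_mem (List.mem_of_ne_of_mem hne.symm hvR)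
      exact length_lt_three_mul_mp_sup_edge_of_append hne hna h
  · obtain ⟨A, C, rfl⟩ := List.append_of_mem hu
    have := h.length_le_two_mul_mp_sup_edge hv
    omega
  · obtain ⟨A, C, rfl⟩ := List.append_of_mem hv
    have := h.length_le_two_mul_mp_sup_edge hu
    rw [edge_comm] at hm ⊢
    omega
  · have := (h.sup_edge hu hv).length_le_mp
    omega

end IsDegreeMonotonePath

end SimpleGraph

theorem mp_add_edge_ge {V : Type*} [Fintype V] (G : SimpleGraph V) (u v : V)
    (hne : u ≠ v) (hna : ¬ G.Adj u v) :
    ((mp G : ℚ) + 1) / 3 ≤ (mp (G ⊔ fromEdgeSet {s(u, v)}) : ℚ) := by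
  classical
  have : Nonempty V := ⟨u⟩
  obtain ⟨l, hl, hlen⟩ := G.exists_isDegreeMonotonePath_length_eq_mp
  have key : mp G + 1 ≤ 3 * mp (G ⊔ edge u v) :=
    hlen ▸ hl.length_lt_three_mul_mp_sup_edge hne hna
  rw [div_le_iff₀ three_pos, mul_comm]
  exact_mod_cast key
end

section
/- Let G be a graph, e = (u,v) an edge of G, and G* the graph obtained from G by subdividing e with a new vertex w. Then mp(G*) ≥ ⌈(mp(G)+1)/2⌉. -/
open SimpleGraph

/-- The graph obtained from `G` by subdividing the edge `uv` with a new vertex `none`. -/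
def subdivide {V : Type*} (G : SimpleGraph V) (u v : V) : SimpleGraph (Option V) :=
  SimpleGraph.fromRel (fun a b =>
    (∃ x y, a = some x ∧ b = some y ∧ G.Adj x y ∧ ¬(x = u ∧ y = v) ∧ ¬(x = v ∧ y = u)) ∨
    (a = none ∧ (b = some u ∨ b = some v)))

/-!
Orient a longest degree monotone path `P` of `G` so that degrees do not decrease along it.
Subdividing `uv` keeps the degrees of the old vertices and gives the new vertex `w` degree 2.
If `P` avoids `uv` it survives in the subdivision. Otherwise `P` splits as `Q ++ R` where `Q` ends
at `a` and `R` starts at `b`, with `{a, b} = {u, v}` and `deg a ≤ deg b`. If `deg b ≥ 2` then `Q`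
and `w :: R` are monotone paths of the subdivision, and otherwise `deg a ≤ 1`, so `Q ++ [w]` and
`R` are. Either way the two paths have `|P| + 1` vertices together, so one of them has at least
`(|P| + 1) / 2`.
-/

namespace SimpleGraph

variable {V : Type*} {G : SimpleGraph V} {u v x y : V}

@[simp]
lemma subdivide_adj_some_some :
    (subdivide G u v).Adj (some x) (some y) ↔ G.Adj x y ∧ s(x, y) ≠ s(u, v) := by
  simp only [subdivide, fromRel_adj, ne_eq, Option.some.injEq, Sym2.eq_iff]
  have : G.Adj x y → x ≠ y := G.ne_of_adj
  grind [G.adj_comm]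

@[simp]
lemma subdivide_adj_none_some : (subdivide G u v).Adj none (some x) ↔ x = u ∨ x = v := by
  simp [subdivide]

@[simp]
lemma subdivide_adj_some_none : (subdivide G u v).Adj (some x) none ↔ x = u ∨ x = v := by
  rw [adj_comm, subdivide_adj_none_some]

def deleteEdgesHomSubdivide (G : SimpleGraph V) (u v : V) :
    G.deleteEdges {s(u, v)} →g subdivide G u v where
  toFun := some
  map_rel' h := subdivide_adj_some_some.mpr (deleteEdges_adj.mp h)

section Degree

variable [Fintype V] [DecidableRel (subdivide G u v).Adj]

lemma degree_subdivide_none (he : G.Adj u v) : (subdivide G u v).degree none = 2 := by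
  classical
  have : (subdivide G u v).neighborFinset none = {some u, some v} := by
    ext (_ | z) <;> simp
  rw [← card_neighborFinset_eq_degree, this, Finset.card_pair (by simpa using he.ne)]

variable [DecidableRel G.Adj]

lemma degree_subdivide_some (he : G.Adj u v) (x : V) :
    (subdivide G u v).degree (some x) = G.degree x := by
  classical
  let φ : V → Option V := fun y => if s(x, y) = s(u, v) then none else some y
  have hφ : Function.Injective φ := by
    intro y₁ y₂ h
    simp only [φ] at h
    split_ifs at h with h₁ h₂
    · exact Sym2.congr_right.mp (h₁.trans h₂.symm)
    · exact Option.some_injective _ h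
  have : (subdivide G u v).neighborFinset (some x) = (G.neighborFinset x).image φ := by
    ext (_ | z)
    · simp only [mem_neighborFinset, subdivide_adj_some_none, Finset.mem_image, φ]
      constructor
      · rintro (rfl | rfl)
        · exact ⟨v, he, if_pos rfl⟩
        · exact ⟨u, he.symm, if_pos Sym2.eq_swap⟩
      · rintro ⟨y, -, hy⟩
        have hxy : s(x, y) = s(u, v) := by_contra fun h => by simp [h] at hy
        exact Sym2.mem_iff.mp (hxy ▸ Sym2.mem_mk_left x y)
    · simp [φ]
  rw [← card_neighborFinset_eq_degree, this, Finset.card_image_of_injective _ hφ,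
    card_neighborFinset_eq_degree]

end Degree

namespace Walk

def liftToSubdivide (p : G.Walk x y) (hp : s(u, v) ∉ p.edges) :
    (subdivide G u v).Walk (some x) (some y) :=
  (p.toDeleteEdge s(u, v) hp).map (deleteEdgesHomSubdivide G u v)

variable {p : G.Walk x y}

@[simp]
lemma support_liftToSubdivide (hp : s(u, v) ∉ p.edges) :
    (p.liftToSubdivide hp).support = p.support.map some := by
  simp [liftToSubdivide, support_map, deleteEdgesHomSubdivide]

lemma IsPath.liftToSubdivide (h : p.IsPath) (hp : s(u, v) ∉ p.edges) :
    (p.liftToSubdivide hp).IsPath :=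
  (h.transfer _).map (Option.some_injective V)

lemma exists_eq_append_cons_of_mem_darts {d : G.Dart} (hd : d ∈ p.darts) :
    ∃ (q : G.Walk x d.fst) (r : G.Walk d.snd y), p = q.append (cons d.adj r) := by
  induction p with
  | nil => simp at hd
  | cons h p ih =>
    rcases List.mem_cons.mp hd with rfl | hd
    · exact ⟨nil, p, rfl⟩
    · obtain ⟨q, r, rfl⟩ := ih hd
      exact ⟨cons h q, r, rfl⟩

variable {a b : V} {q : G.Walk x a} {r : G.Walk b y} {hab : G.Adj a b}

lemma IsPath.notMem_edges_of_append_cons (hp : (q.append (cons hab r)).IsPath) :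
    s(a, b) ∉ q.edges ∧ s(a, b) ∉ r.edges := by
  have hdisj := (List.nodup_append.mp (by simpa [support_append] using hp.support_nodup)).2.2
  exact ⟨fun h => hdisj _ (q.snd_mem_support_of_mem_edges h) _ r.start_mem_support rfl,
    fun h => hdisj _ q.end_mem_support _ (r.fst_mem_support_of_mem_edges h) rfl⟩

end Walk

section MonotonePaths

variable {W : Type*} [Fintype W] (H : SimpleGraph W) [DecidableRel H.Adj]

def degreeMonotonePathLengths : Set ℕ :=
  {n | ∃ (x y : W) (p : H.Walk x y), p.IsPath ∧
    ((p.support.map fun x => H.degree x).IsChain (· ≤ ·) ∨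
      (p.support.map fun x => H.degree x).IsChain (· ≥ ·)) ∧ p.support.length = n}

lemma mp_eq_sSup_degreeMonotonePathLengths : mp H = sSup (degreeMonotonePathLengths H) := by
  unfold mp degreeMonotonePathLengths
  congr!

lemma bddAbove_degreeMonotonePathLengths : BddAbove (degreeMonotonePathLengths H) := by
  refine ⟨Fintype.card W, ?_⟩
  rintro _ ⟨x, y, p, hp, -, rfl⟩
  exact hp.support_nodup.length_le_card

variable {H}

lemma length_support_le_mp {x y : W} {p : H.Walk x y} (hp : p.IsPath)
    (hmono : (p.support.map fun x => H.degree x).IsChain (· ≤ ·)) : p.support.length ≤ mp H := by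
  rw [mp_eq_sSup_degreeMonotonePathLengths]
  exact le_csSup (bddAbove_degreeMonotonePathLengths H) ⟨x, y, p, hp, .inl hmono, rfl⟩

lemma exists_isPath_degree_monotone_length_eq_mp [Nonempty W] :
    ∃ (x y : W) (p : H.Walk x y), p.IsPath ∧
      (p.support.map fun x => H.degree x).IsChain (· ≤ ·) ∧ p.support.length = mp H := by
  obtain ⟨x⟩ := ‹Nonempty W›
  have hne : (degreeMonotonePathLengths H).Nonempty := ⟨1, x, x, .nil, .nil, .inl (by simp), rfl⟩
  obtain ⟨x, y, p, hp, hmono | hanti, hlen⟩ := mp_eq_sSup_degreeMonotonePathLengths H ▸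
    Nat.sSup_mem hne (bddAbove_degreeMonotonePathLengths H)
  · exact ⟨x, y, p, hp, hmono, hlen⟩
  · refine ⟨y, x, p.reverse, hp.reverse, ?_, by simpa using hlen⟩
    simpa [List.isChain_reverse] using hanti

end MonotonePaths

section Subdivide

variable [Fintype V] [DecidableRel G.Adj] {p : G.Walk x y}

lemma length_support_le_mp_subdivide (he : G.Adj u v) (hp : p.IsPath)
    (hmono : (p.support.map fun x => G.degree x).IsChain (· ≤ ·)) (huv : s(u, v) ∉ p.edges) :
    p.support.length ≤ mp (subdivide G u v) := by
  classical
  simpa using length_support_le_mp (hp.liftToSubdivide huv)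
    (by simpa [Function.comp_def, degree_subdivide_some he] using hmono)

lemma length_support_add_one_le_mp_subdivide_of_two_le_degree (he : G.Adj u v)
    (hx : x = u ∨ x = v) (hdeg : 2 ≤ G.degree x) (hp : p.IsPath)
    (hmono : (p.support.map fun x => G.degree x).IsChain (· ≤ ·)) (huv : s(u, v) ∉ p.edges) :
    p.support.length + 1 ≤ mp (subdivide G u v) := by
  classical
  have hadj : (subdivide G u v).Adj none (some x) := subdivide_adj_none_some.mpr hx
  have hpath : (Walk.cons hadj (p.liftToSubdivide huv)).IsPath := by
    simpa [Walk.cons_isPath_iff] using hp.liftToSubdivide huv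
  have hchain : (2 :: p.support.map fun x => G.degree x).IsChain (· ≤ ·) :=
    hmono.cons <| by
      rw [List.head?_eq_some_head (by simp), List.head_map, Walk.head_support]
      simpa using hdeg
  simpa using length_support_le_mp hpath (by
    simpa [Function.comp_def, degree_subdivide_some he, degree_subdivide_none he] using hchain)

lemma length_support_add_one_le_mp_subdivide_of_degree_le_two (he : G.Adj u v)
    (hy : y = u ∨ y = v) (hdeg : G.degree y ≤ 2) (hp : p.IsPath)
    (hmono : (p.support.map fun x => G.degree x).IsChain (· ≤ ·)) (huv : s(u, v) ∉ p.edges) :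
    p.support.length + 1 ≤ mp (subdivide G u v) := by
  classical
  have hadj : (subdivide G u v).Adj (some y) none := subdivide_adj_some_none.mpr hy
  have hpath : ((p.liftToSubdivide huv).concat hadj).IsPath :=
    (hp.liftToSubdivide huv).concat (by simp) hadj
  have hlast : p.support.getLast? = some y := by
    rw [List.getLast?_eq_some_getLast (by simp), Walk.getLast_support]
  simpa using length_support_le_mp hpath (by
    simpa [Walk.support_concat, hlast, List.isChain_append, Function.comp_def,
      degree_subdivide_some he, degree_subdivide_none he, hdeg] using hmono)

lemma length_support_add_one_le_two_mul_mp_subdivide (he : G.Adj u v) (hp : p.IsPath)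
    (hmono : (p.support.map fun x => G.degree x).IsChain (· ≤ ·)) :
    p.support.length + 1 ≤ 2 * mp (subdivide G u v) := by
  by_cases huv : s(u, v) ∈ p.edges
  · obtain ⟨⟨⟨a, b⟩, hab⟩, hd, hde⟩ := List.mem_map.mp huv
    obtain ⟨q, r, rfl⟩ := Walk.exists_eq_append_cons_of_mem_darts hd
    replace hde : s(a, b) = s(u, v) := hde
    have hends : (a = u ∨ a = v) ∧ (b = u ∨ b = v) := by
      rcases Sym2.eq_iff.mp hde with ⟨rfl, rfl⟩ | ⟨rfl, rfl⟩ <;> simp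
    obtain ⟨hqe, hre⟩ := hde ▸ hp.notMem_edges_of_append_cons
    have hq : q.IsPath := hp.of_append_left
    have hr : r.IsPath := (Walk.cons_isPath_iff _ _).mp hp.of_append_right |>.1
    simp only [Walk.support_append, Walk.support_cons, List.tail_cons, List.map_append,
      List.length_append] at hmono ⊢
    have hjunc : G.degree a ≤ G.degree b := by
      have := hmono.rel_getLast_head_of_append (by simp) (by simp)
      rwa [List.getLast_map, List.head_map, Walk.getLast_support, Walk.head_support] at this
    rcases le_or_gt 2 (G.degree b) with hb | hb
    · have := length_support_le_mp_subdivide he hq hmono.left_of_append hqe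
      have := length_support_add_one_le_mp_subdivide_of_two_le_degree he hends.2 hb hr
        hmono.right_of_append hre
      omega
    · have := length_support_add_one_le_mp_subdivide_of_degree_le_two he hends.1 (by omega) hq
        hmono.left_of_append hqe
      have := length_support_le_mp_subdivide he hr hmono.right_of_append hre
      omega
  · have := length_support_le_mp_subdivide he hp hmono huv
    have : 0 < p.support.length := List.length_pos_of_ne_nil p.support_ne_nil
    omega

end Subdivide

end SimpleGraph

theorem mp_subdivide_ge {V : Type*} [Fintype V] (G : SimpleGraph V) (u v : V)
    (he : G.Adj u v) :
    ⌈((mp G : ℚ) + 1) / 2⌉ ≤ (mp (subdivide G u v) : ℤ) := by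
  classical
  have : Nonempty V := ⟨u⟩
  obtain ⟨x, y, p, hp, hmono, hlen⟩ := exists_isPath_degree_monotone_length_eq_mp (H := G)
  have := hlen ▸ length_support_add_one_le_two_mul_mp_subdivide he hp hmono
  rw [Int.ceil_le, div_le_iff₀ two_pos]
  exact_mod_cast (by omega : mp G + 1 ≤ mp (subdivide G u v) * 2)
end

section
/- Let G be a triangle-free graph and e = uv an edge of G, and let G·e be the graph obtained by contracting e to a new vertex w. Then mp(G·e) ≤ 2·mp(G). -/
open SimpleGraph

/-- The graph obtained from `G` by contracting the edge `uv`: the vertex `u` plays the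
role of the merged vertex `w`, and `v` is removed. -/
def contractEdge {V : Type*} (G : SimpleGraph V) (u v : V) : SimpleGraph {x : V // x ≠ v} :=
  SimpleGraph.fromRel (fun a b =>
    G.Adj a.1 b.1 ∨ (a.1 = u ∧ G.Adj v b.1) ∨ (b.1 = u ∧ G.Adj a.1 v))

/-!
Write `w` for the vertex of `G·e` obtained by merging `u` and `v`. Because `G` is triangle-free,
contracting `e` leaves every degree except `deg w = deg u + deg v - 2` unchanged, so a degree
monotone path of `G·e` avoiding `w` is one of `G`. A monotone path `P` through `w` splits at `w`
into two monotone paths starting at `w`; each lifts to `G` once `w` is dropped, which gives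
`|P| ≤ 2 mp(G) + 1`. To save the last vertex, let `x, w, y` be consecutive on `P` with
`deg x ≤ deg w ≤ deg y` and let `z ∈ {u, v}` be a neighbour of `y` in `G`. If `deg z ≤ deg w`, then
`z` can be put in front of the lift of the half through `y`. Otherwise the other end of `e` has
degree `1`, so `x` is adjacent to `z` and `deg x ≤ deg w < deg z`: now `z` extends the lift of the
half through `x`.
-/

section

variable {V : Type*} {G : SimpleGraph V}

theorem SimpleGraph.Walk.isChain_map_support_append {α : Type*} {R : α → α → Prop} {f : V → α}
    {a b c : V} {p : G.Walk a b} {q : G.Walk b c}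
    (h : ((p.append q).support.map f).IsChain R) :
    (p.support.map f).IsChain R ∧ (q.support.map f).IsChain R := by
  refine ⟨h.prefix ?_, h.suffix ?_⟩
  · rw [Walk.support_append, List.map_append]
    exact List.prefix_append _ _
  · rw [Walk.support_append_eq_support_dropLast_append, List.map_append]
    exact List.suffix_append _ _

theorem SimpleGraph.Walk.isChain_map_support_cons {α : Type*} {R : α → α → Prop} {f : V → α}
    {a b c : V} {h : G.Adj a b} {p : G.Walk b c} :
    ((Walk.cons h p).support.map f).IsChain R ↔ R (f a) (f b) ∧ (p.support.map f).IsChain R := by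
  rw [Walk.support_cons, ← Walk.cons_tail_support p, List.map_cons, List.map_cons,
    List.isChain_cons_cons]

section

variable [Fintype V] [DecidableRel G.Adj]

theorem le_mp_of_isPath {R : ℕ → ℕ → Prop} (hR : R = (· ≤ ·) ∨ R = (· ≥ ·)) {a b : V}
    {p : G.Walk a b} (hp : p.IsPath) (hch : (p.support.map fun x => G.degree x).IsChain R) :
    p.length + 1 ≤ mp G := by
  obtain rfl : ‹DecidableRel G.Adj› = Classical.decRel _ := Subsingleton.elim _ _
  rw [← Walk.length_support]
  refine le_csSup ⟨Fintype.card V, ?_⟩ ⟨a, b, p, hp, ?_, rfl⟩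
  · rintro n ⟨x, y, q, hq, -, rfl⟩
    rw [Walk.length_support]
    exact hq.length_lt
  · rcases hR with rfl | rfl
    · exact .inl hch
    · exact .inr hch

theorem mp_le {n : ℕ} (h : ∀ (a b : V) (p : G.Walk a b), p.IsPath →
      (p.support.map fun x => G.degree x).IsChain (· ≤ ·) → p.length + 1 ≤ n) :
    mp G ≤ n := by
  obtain rfl : ‹DecidableRel G.Adj› = Classical.decRel _ := Subsingleton.elim _ _
  refine csSup_le' ?_
  rintro _ ⟨a, b, p, hp, hch | hch, rfl⟩
  · rw [Walk.length_support]
    exact h a b p hp hch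
  · rw [← List.length_reverse, ← Walk.support_reverse, Walk.length_support]
    refine h b a p.reverse hp.reverse ?_
    rw [Walk.support_reverse, List.map_reverse, List.isChain_reverse]
    exact hch

theorem one_le_mp (x : V) : 1 ≤ mp G := by
  simpa using le_mp_of_isPath (G := G) (Or.inl rfl) (Walk.IsPath.nil (u := x)) (by simp)

theorem degree_le_or_adj_of_adj {z z' x : V} {d : ℕ} (hzz' : G.Adj z z')
    (hd : G.degree z + G.degree z' ≤ d + 2) (hxz : x ≠ z) (hx : G.Adj z x ∨ G.Adj z' x) :
    G.degree z ≤ d ∨ (G.Adj z x ∧ d < G.degree z) := by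
  refine (le_or_gt _ _).imp_right fun hlt => ⟨hx.resolve_right fun hz'x => ?_, hlt⟩
  have : 1 < G.degree z' := Finset.one_lt_card.mpr
    ⟨z, (mem_neighborFinset ..).mpr hzz'.symm, x, (mem_neighborFinset ..).mpr hz'x, hxz.symm⟩
  omega

theorem exists_adj_le_or_exists_adj_ge {u v x y : V} {d : ℕ} (huv : G.Adj u v)
    (hd : G.degree u + G.degree v ≤ d + 2) (hxd : G.degree x ≤ d) (hdy : d ≤ G.degree y)
    (hxu : x ≠ u) (hxv : x ≠ v) (hx : G.Adj u x ∨ G.Adj v x) (hy : G.Adj u y ∨ G.Adj v y) :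
    (∃ z, (z = u ∨ z = v) ∧ G.Adj z y ∧ G.degree z ≤ G.degree y) ∨
      ∃ z, (z = u ∨ z = v) ∧ G.Adj z x ∧ G.degree x ≤ G.degree z := by
  rcases hy with hy | hy
  · rcases degree_le_or_adj_of_adj huv hd hxu hx with h | ⟨h, hlt⟩
    · exact .inl ⟨u, .inl rfl, hy, h.trans hdy⟩
    · exact .inr ⟨u, .inl rfl, h, by omega⟩
  · rcases degree_le_or_adj_of_adj (d := d) huv.symm (by omega) hxv hx.symm with h | ⟨h, hlt⟩
    · exact .inl ⟨v, .inr rfl, hy, h.trans hdy⟩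
    · exact .inr ⟨v, .inr rfl, h, by omega⟩

end

section

variable {u v : V}

theorem contractEdge_adj {a b : {x // x ≠ v}} :
    (contractEdge G u v).Adj a b ↔
      a ≠ b ∧ (G.Adj a b ∨ (a.1 = u ∧ G.Adj v b) ∨ (b.1 = u ∧ G.Adj v a)) := by
  simp only [contractEdge, fromRel_adj, G.adj_comm _ v]
  tauto

theorem contractEdge_adj_mk_left (huv : u ≠ v) {b : {x // x ≠ v}} :
    (contractEdge G u v).Adj ⟨u, huv⟩ b ↔ b.1 ≠ u ∧ (G.Adj u b ∨ G.Adj v b) := by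
  rw [contractEdge_adj, ne_comm, Ne, Subtype.ext_iff]
  grind

theorem adj_of_contractEdge_adj {a b : {x // x ≠ v}} (ha : a.1 ≠ u) (hb : b.1 ≠ u)
    (h : (contractEdge G u v).Adj a b) : G.Adj a b := by
  grind [contractEdge_adj]

theorem degree_contractEdge_of_ne (htf : G.CliqueFree 3) (huv : G.Adj u v)
    {x : {x // x ≠ v}} (hx : x.1 ≠ u) [Fintype ((contractEdge G u v).neighborSet x)]
    [Fintype (G.neighborSet x)] :
    (contractEdge G u v).degree x = G.degree x := by
  classical
  have not_adj_both : ¬ (G.Adj x u ∧ G.Adj x v) := fun ⟨hxu, hxv⟩ =>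
    htf {x.1, u, v} (is3Clique_triple_iff.mpr ⟨hxu, hxv, huv⟩)
  refine (Finset.card_bij (fun z _ => if h : z = v then ⟨u, huv.ne⟩ else ⟨z, h⟩)
    ?_ ?_ ?_).symm
  · intro z hz
    simp only [mem_neighborFinset, contractEdge_adj] at hz ⊢
    split_ifs <;> grind [G.adj_comm, SimpleGraph.irrefl]
  · intro z₁ hz₁ z₂ hz₂ h
    simp only [mem_neighborFinset] at hz₁ hz₂
    split_ifs at h <;> grind [G.adj_comm, SimpleGraph.irrefl]
  · rintro ⟨y, hyv⟩ hy
    simp only [mem_neighborFinset, contractEdge_adj] at hy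
    by_cases hxy : G.Adj x y
    · exact ⟨y, (mem_neighborFinset ..).mpr hxy, dif_neg hyv⟩
    · refine ⟨v, (mem_neighborFinset ..).mpr ?_, ?_⟩ <;> grind [G.adj_comm]

theorem degree_contractEdge_add_two (htf : G.CliqueFree 3) (huv : G.Adj u v)
    [Fintype ((contractEdge G u v).neighborSet ⟨u, huv.ne⟩)] [Fintype (G.neighborSet u)]
    [Fintype (G.neighborSet v)] :
    (contractEdge G u v).degree ⟨u, huv.ne⟩ + 2 = G.degree u + G.degree v := by
  classical
  have hdisj : Disjoint (G.neighborFinset u) (G.neighborFinset v) :=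
    Finset.disjoint_left.mpr fun z hu hv => htf {u, v, z}
      (is3Clique_triple_iff.mpr
        ⟨huv, (mem_neighborFinset ..).mp hu, (mem_neighborFinset ..).mp hv⟩)
  have hsub : {u, v} ⊆ G.neighborFinset u ∪ G.neighborFinset v := by
    simp [Finset.insert_subset_iff, huv, huv.symm]
  have hcard : (contractEdge G u v).degree ⟨u, huv.ne⟩ =
      ((G.neighborFinset u ∪ G.neighborFinset v) \ {u, v}).card := by
    refine Finset.card_bij (fun y _ => y.1) ?_ (fun _ _ _ _ => Subtype.ext) ?_
    · intro y hy
      simp only [mem_neighborFinset, contractEdge_adj_mk_left] at hy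
      simp [hy, y.2]
    · intro z hz
      simp only [Finset.mem_sdiff, Finset.mem_union, mem_neighborFinset, Finset.mem_insert,
        Finset.mem_singleton, not_or] at hz
      exact ⟨⟨z, hz.2.2⟩, by simpa [contractEdge_adj_mk_left] using ⟨hz.2.1, hz.1⟩, rfl⟩
  have hunion : (G.neighborFinset u ∪ G.neighborFinset v).card = G.degree u + G.degree v :=
    Finset.card_union_of_disjoint hdisj
  have htwo := Finset.card_le_card hsub
  rw [Finset.card_pair huv.ne, hunion] at htwo
  rw [hcard, Finset.card_sdiff_of_subset hsub, hunion, Finset.card_pair huv.ne]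
  omega

theorem exists_walk_support_eq_map_val {a b : {x // x ≠ v}} (p : (contractEdge G u v).Walk a b)
    (hp : ∀ x ∈ p.support, x.1 ≠ u) :
    ∃ q : G.Walk a b, q.support = p.support.map Subtype.val := by
  induction p with
  | nil => exact ⟨Walk.nil, rfl⟩
  | cons h p ih =>
    obtain ⟨q, hq⟩ := ih fun x hx => hp x (List.mem_cons_of_mem _ hx)
    have hadj := adj_of_contractEdge_adj (hp _ List.mem_cons_self)
      (hp _ (List.mem_cons_of_mem _ p.start_mem_support)) h
    exact ⟨Walk.cons hadj q, by simp [hq]⟩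

variable [Fintype V] [DecidableEq V] [DecidableRel G.Adj] [DecidableRel (contractEdge G u v).Adj]

theorem exists_isPath_lift (htf : G.CliqueFree 3) (huv : G.Adj u v) {a b : {x // x ≠ v}}
    {p : (contractEdge G u v).Walk a b} (hp : p.IsPath) (hw : ⟨u, huv.ne⟩ ∉ p.support) :
    ∃ q : G.Walk a b, q.IsPath ∧ q.length = p.length ∧ u ∉ q.support ∧ v ∉ q.support ∧
      q.support.map (fun x => G.degree x) =
        p.support.map fun x => (contractEdge G u v).degree x := by
  have hne : ∀ x ∈ p.support, x.1 ≠ u := fun x hx hxu =>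
    hw ((Subtype.ext hxu : x = ⟨u, huv.ne⟩) ▸ hx)
  obtain ⟨q, hq⟩ := exists_walk_support_eq_map_val p hne
  refine ⟨q, ?_, ?_, ?_, ?_, ?_⟩
  · rw [Walk.isPath_def, hq]
    exact hp.support_nodup.map Subtype.val_injective
  · rw [← Nat.add_right_cancel_iff, ← Walk.length_support, ← Walk.length_support, hq,
      List.length_map]
  · simpa [hq] using fun _ => hw
  · simp [hq]
  · rw [hq, List.map_map]
    exact List.map_congr_left fun x hx => (degree_contractEdge_of_ne htf huv (hne x hx)).symm

theorem length_le_mp_of_isPath_contractEdge (htf : G.CliqueFree 3) (huv : G.Adj u v)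
    {R : ℕ → ℕ → Prop} (hR : R = (· ≤ ·) ∨ R = (· ≥ ·)) {c : {x // x ≠ v}}
    {r : (contractEdge G u v).Walk ⟨u, huv.ne⟩ c} (hr : r.IsPath)
    (hch : (r.support.map fun x => (contractEdge G u v).degree x).IsChain R) :
    r.length ≤ mp G := by
  cases r with
  | nil => exact Nat.zero_le _
  | cons h s =>
    obtain ⟨hs, hw⟩ := (Walk.cons_isPath_iff h s).mp hr
    obtain ⟨q, hq, hlen, -, -, hdeg⟩ := exists_isPath_lift htf huv hs hw
    have := le_mp_of_isPath hR hq (hdeg ▸ hch.tail)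
    rwa [Walk.length_cons, ← hlen]

theorem length_cons_lt_mp (htf : G.CliqueFree 3) (huv : G.Adj u v)
    {R : ℕ → ℕ → Prop} (hR : R = (· ≤ ·) ∨ R = (· ≥ ·)) {y c : {x // x ≠ v}}
    (h : (contractEdge G u v).Adj ⟨u, huv.ne⟩ y) {s : (contractEdge G u v).Walk y c}
    (hr : (Walk.cons h s).IsPath)
    (hch : (s.support.map fun x => (contractEdge G u v).degree x).IsChain R)
    {z : V} (hz : z = u ∨ z = v) (hzy : G.Adj z y) (hRz : R (G.degree z) (G.degree y)) :
    (Walk.cons h s).length < mp G := by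
  obtain ⟨hs, hw⟩ := (Walk.cons_isPath_iff h s).mp hr
  obtain ⟨q, hq, hlen, hu, hv, hdeg⟩ := exists_isPath_lift htf huv hs hw
  have hzq : z ∉ q.support := by rcases hz with rfl | rfl <;> assumption
  have hchq : (q.support.map fun x => G.degree x).IsChain R := hdeg ▸ hch
  have := le_mp_of_isPath hR ((Walk.cons_isPath_iff hzy q).mpr ⟨hq, hzq⟩)
    (Walk.isChain_map_support_cons.mpr ⟨hRz, hchq⟩)
  rw [Walk.length_cons, hlen] at this
  rw [Walk.length_cons]
  omega

theorem length_add_length_lt_two_mul_mp (htf : G.CliqueFree 3) (huv : G.Adj u v)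
    {a b : {x // x ≠ v}} {r₁ : (contractEdge G u v).Walk ⟨u, huv.ne⟩ a}
    {r₂ : (contractEdge G u v).Walk ⟨u, huv.ne⟩ b} (hr₁ : r₁.IsPath) (hr₂ : r₂.IsPath)
    (hch₁ : (r₁.support.map fun x => (contractEdge G u v).degree x).IsChain (· ≥ ·))
    (hch₂ : (r₂.support.map fun x => (contractEdge G u v).degree x).IsChain (· ≤ ·)) :
    r₁.length + r₂.length < 2 * mp G := by
  have h₁ := length_le_mp_of_isPath_contractEdge htf huv (.inr rfl) hr₁ hch₁
  have h₂ := length_le_mp_of_isPath_contractEdge htf huv (.inl rfl) hr₂ hch₂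
  have hpos : 1 ≤ mp G := one_le_mp u
  cases r₁ with
  | nil => simp only [Walk.length_nil]; omega
  | @cons _ x _ hx s₁ =>
  cases r₂ with
  | nil => simp only [Walk.length_nil]; omega
  | @cons _ y _ hy s₂ =>
  obtain ⟨hxw, hs₁⟩ := Walk.isChain_map_support_cons.mp hch₁
  obtain ⟨hwy, hs₂⟩ := Walk.isChain_map_support_cons.mp hch₂
  obtain ⟨hxu, hxG⟩ := (contractEdge_adj_mk_left huv.ne).mp hx
  obtain ⟨hyu, hyG⟩ := (contractEdge_adj_mk_left huv.ne).mp hy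
  rw [degree_contractEdge_of_ne htf huv hxu] at hxw
  rw [degree_contractEdge_of_ne htf huv hyu] at hwy
  rcases exists_adj_le_or_exists_adj_ge huv (degree_contractEdge_add_two htf huv).ge hxw hwy
    hxu x.2 hxG hyG with ⟨z, hz, hzy, hle⟩ | ⟨z, hz, hzx, hle⟩
  · have := length_cons_lt_mp htf huv (.inl rfl) hy hr₂ hs₂ hz hzy hle
    omega
  · have := length_cons_lt_mp htf huv (.inr rfl) hx hr₁ hs₁ hz hzx hle
    omega

end

end

theorem mp_contract_le {V : Type*} [Fintype V] [DecidableEq V] (G : SimpleGraph V)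
    (u v : V) (he : G.Adj u v) (htf : G.CliqueFree 3) :
    mp (contractEdge G u v) ≤ 2 * mp G := by
  classical
  refine mp_le fun a b p hp hch => ?_
  by_cases hw : ⟨u, he.ne⟩ ∈ p.support
  · have hsplit := p.take_spec hw
    rw [← hsplit] at hch
    obtain ⟨hch₁, hch₂⟩ := Walk.isChain_map_support_append hch
    have := length_add_length_lt_two_mul_mp htf he (hp.takeUntil hw).reverse (hp.dropUntil hw)
      (by rwa [Walk.support_reverse, List.map_reverse, List.isChain_reverse]) hch₂
    rw [Walk.length_reverse] at this
    rw [← hsplit, Walk.length_append]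
    omega
  · obtain ⟨q, hq, hlen, -, -, hdeg⟩ := exists_isPath_lift htf he hp hw
    have := le_mp_of_isPath (.inl rfl) hq (hdeg ▸ hch)
    omega
end

section
/- Let G be a triangle-free graph and e = uv an edge of G, and let G·e be the graph obtained by contracting e. Then mp(G·e) ≥ mp(G)/3. -/
/-!
Let `k = mp (G·e)` and let `P` be a nondecreasing path of `G`. Since `G` is triangle-free, every
vertex other than `u, v` keeps its degree in `G·e`, and the merged vertex `w` has degree
`d(u) + d(v) - 2`. Deleting `u` and `v` cuts `P` into at most three segments, each a degree
monotone path of `G·e`, hence with at most `k` vertices. If `P` meets only one of `u, v`, then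
`|P| ≤ 2k + 1 ≤ 3k`. Otherwise `P = A x M y C` with `{x, y} = {u, v}`. If `M` is nonempty, then
`d(y) ≥ d(x) ≥ 2`, so `d(w) ≥ d(y) ≥ d(x)` and both `A w` and `M w` are nondecreasing paths of
`G·e`: `|P| ≤ (k - 1) + (k - 1) + k + 2`. If `M` is empty, `|P| = |A| + |C| + 2`, and when `A` is
nonempty its last vertex is adjacent to `w` in `G·e`, so `k ≥ 2` and `|P| ≤ 2k + 2 ≤ 3k`.
-/

open SimpleGraph

lemma List.forall_not_or_exists_eq_append_cons {α : Type*} (p : α → Prop) (l : List α) :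
    (∀ a ∈ l, ¬ p a) ∨ ∃ A x R, l = A ++ x :: R ∧ p x ∧ ∀ a ∈ A, ¬ p a := by
  classical
  cases h : l.find? (fun a ↦ decide (p a)) with
  | none => exact Or.inl fun a ha ↦ by simpa using List.find?_eq_none.mp h a ha
  | some x =>
    obtain ⟨hx, A, R, rfl, hA⟩ := List.find?_eq_some_iff_append.mp h
    exact Or.inr ⟨A, x, R, rfl, by simpa using hx, fun a ha ↦ by simpa using hA a ha⟩

namespace DegreeMonotonePath

section General

variable {W : Type*} (H : SimpleGraph W)

/-- `SimpleGraph.degree` without a `Fintype` instance on the neighbourhood, so that degrees in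
`G` and in its contraction can be compared directly. -/
noncomputable def deg (x : W) : ℕ := (H.neighborSet x).ncard

lemma degree_eq_deg (x : W) [Fintype (H.neighborSet x)] : H.degree x = deg H x := by
  rw [deg, Set.ncard_eq_toFinset_card', ← card_neighborSet_eq_degree, Set.toFinset_card]

/-- Only nondecreasing paths are needed: a nonincreasing path read backwards is nondecreasing. -/
def IsDegMonotonePath (l : List W) : Prop :=
  l.IsChain H.Adj ∧ l.Nodup ∧ (l.map (deg H)).IsChain (· ≤ ·)

variable {H}

lemma IsDegMonotonePath.infix {l₁ l : List W} (hl : IsDegMonotonePath H l) (h : l₁ <:+: l) :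
    IsDegMonotonePath H l₁ :=
  ⟨hl.1.infix h, hl.2.1.sublist h.sublist, hl.2.2.infix (h.map _)⟩

lemma isDegMonotonePath_append_singleton {l : List W} {b : W} :
    IsDegMonotonePath H (l ++ [b]) ↔
      IsDegMonotonePath H l ∧ b ∉ l ∧ ∀ a ∈ l.getLast?, H.Adj a b ∧ deg H a ≤ deg H b := by
  simp only [IsDegMonotonePath, List.isChain_append, List.nodup_append, List.map_append,
    List.getLast?_map]
  grind

lemma two_le_deg [Finite W] {x a b : W} (ha : H.Adj x a) (hb : H.Adj x b) (hab : a ≠ b) :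
    2 ≤ deg H x :=
  Set.ncard_pair hab ▸ Set.ncard_le_ncard (Set.pair_subset ha hb)

variable [Fintype W]

variable (H) in
def monotonePathLengths : Set ℕ := {n | ∃ l : List W, l ≠ [] ∧ l.IsChain H.Adj ∧ l.Nodup ∧
    ((l.map (deg H)).IsChain (· ≤ ·) ∨ (l.map (deg H)).IsChain (· ≥ ·)) ∧ l.length = n}

lemma mp_eq_sSup : mp H = sSup (monotonePathLengths H) := by
  classical
  simp only [mp, monotonePathLengths, degree_eq_deg]
  congr! 3 with n
  constructor
  · rintro ⟨a, b, p, hp, hmono, rfl⟩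
    exact ⟨p.support, p.support_ne_nil, p.isChain_adj_support, hp.support_nodup, hmono, rfl⟩
  · rintro ⟨l, hne, hadj, hnodup, hmono, rfl⟩
    refine ⟨_, _, Walk.ofSupport l hne hadj, ?_, ?_, by simp⟩
    · rwa [Walk.isPath_def, Walk.support_ofSupport]
    · rwa [Walk.support_ofSupport]

lemma bddAbove_monotonePathLengths : BddAbove (monotonePathLengths H) :=
  ⟨Fintype.card W, by rintro _ ⟨l, -, -, hnodup, -, rfl⟩; exact hnodup.length_le_card⟩

lemma IsDegMonotonePath.length_le_mp {l : List W} (hl : IsDegMonotonePath H l) :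
    l.length ≤ mp H := by
  rcases eq_or_ne l [] with rfl | hne
  · exact Nat.zero_le _
  rw [mp_eq_sSup]
  exact le_csSup bddAbove_monotonePathLengths ⟨l, hne, hl.1, hl.2.1, Or.inl hl.2.2, rfl⟩

variable (H) in
lemma exists_isDegMonotonePath_length_eq_mp [Nonempty W] :
    ∃ l : List W, IsDegMonotonePath H l ∧ l.length = mp H := by
  obtain ⟨x⟩ := ‹Nonempty W›
  have hne : (monotonePathLengths H).Nonempty :=
    ⟨1, [x], List.cons_ne_nil _ _, .singleton x, List.nodup_singleton x, Or.inl (.singleton _), rfl⟩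
  obtain ⟨l, -, hadj, hnodup, hmono | hmono, hlen⟩ :=
    mp_eq_sSup (H := H) ▸ Nat.sSup_mem hne bddAbove_monotonePathLengths
  · exact ⟨l, ⟨hadj, hnodup, hmono⟩, hlen⟩
  · refine ⟨l.reverse, ⟨?_, List.nodup_reverse.mpr hnodup, ?_⟩, by rw [List.length_reverse, hlen]⟩
    · exact List.isChain_reverse.mpr (hadj.imp fun _ _ h ↦ h.symm)
    · rwa [List.map_reverse, List.isChain_reverse]

lemma one_le_mp [Nonempty W] : 1 ≤ mp H := by
  obtain ⟨x⟩ := ‹Nonempty W›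
  exact IsDegMonotonePath.length_le_mp (l := [x])
    ⟨.singleton x, List.nodup_singleton x, .singleton _⟩

lemma two_le_mp_of_adj {a b : W} (h : H.Adj a b) : 2 ≤ mp H := by
  wlog hab : deg H a ≤ deg H b generalizing a b
  · exact this h.symm (le_of_not_ge hab)
  exact IsDegMonotonePath.length_le_mp (l := [a, b])
    ⟨by simpa using h, by simpa using h.ne, by simpa⟩

end General

section Contraction

variable {V : Type*} {G : SimpleGraph V} {u v : V}

lemma contractEdge_adj {a b : {x : V // x ≠ v}} :
    (contractEdge G u v).Adj a b ↔
      a ≠ b ∧ (G.Adj a b ∨ (a.1 = u ∧ G.Adj v b) ∨ (b.1 = u ∧ G.Adj a v)) := by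
  simp only [contractEdge, fromRel_adj, G.adj_comm]
  tauto

lemma contractEdge_adj_merged (he : G.Adj u v) {a : {x : V // x ≠ v}} (ha : a.1 ≠ u) {x : V}
    (hx : x = u ∨ x = v) (hax : G.Adj a x) : (contractEdge G u v).Adj a ⟨u, he.ne⟩ := by
  refine contractEdge_adj.mpr ⟨fun h ↦ ha (congrArg Subtype.val h), ?_⟩
  rcases hx with rfl | rfl
  exacts [Or.inl hax, Or.inr (Or.inr ⟨rfl, hax⟩)]

lemma not_adj_of_adj_of_cliqueFree (htf : G.CliqueFree 3) (he : G.Adj u v) {a : V}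
    (hau : G.Adj a u) : ¬ G.Adj a v := fun hav ↦ by
  classical
  exact htf {a, u, v} (is3Clique_triple_iff.mpr ⟨hau, hav, he⟩)

lemma deg_contractEdge_of_eq [Finite V] (htf : G.CliqueFree 3) (he : G.Adj u v)
    {a : {x : V // x ≠ v}} (ha : a.1 = u) : deg (contractEdge G u v) a = deg G u + deg G v - 2 := by
  have himage : Subtype.val '' (contractEdge G u v).neighborSet a =
      (G.neighborSet u ∪ G.neighborSet v) \ {u, v} := by
    ext c
    simp only [Set.mem_image, mem_neighborSet, contractEdge_adj, Set.mem_sdiff, Set.mem_union,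
      Set.mem_insert_iff, Set.mem_singleton_iff]
    constructor
    · rintro ⟨b, ⟨hab, h⟩, rfl⟩
      grind [G.ne_of_adj]
    · rintro ⟨hc, hcuv⟩
      obtain ⟨hcu, hcv⟩ := not_or.mp hcuv
      exact ⟨⟨c, hcv⟩, ⟨fun h ↦ hcu (ha ▸ congrArg Subtype.val h).symm, by grind⟩, rfl⟩
  have hdisj : Disjoint (G.neighborSet u) (G.neighborSet v) :=
    Set.disjoint_left.mpr fun c hcu hcv ↦
      not_adj_of_adj_of_cliqueFree htf he (G.adj_symm hcu) (G.adj_symm hcv)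
  rw [deg, ← Set.ncard_image_of_injective _ Subtype.val_injective, himage,
    Set.ncard_sdiff (s := {u, v}) (Set.pair_subset (Or.inr he.symm) (Or.inl he)),
    Set.ncard_union_eq hdisj, Set.ncard_pair he.ne, deg, deg]

variable [DecidableEq V]

lemma image_val_neighborSet_contractEdge (huv : u ≠ v) {a : {x : V // x ≠ v}} (ha : a.1 ≠ u) :
    Subtype.val '' (contractEdge G u v).neighborSet a =
      (fun c ↦ if c = v then u else c) '' G.neighborSet a := by
  ext c
  simp only [Set.mem_image, mem_neighborSet, contractEdge_adj]
  constructor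
  · rintro ⟨b, ⟨hab, h⟩, rfl⟩
    grind [G.ne_of_adj]
  · rintro ⟨b, hab, rfl⟩
    by_cases hbv : b = v
    · subst hbv
      exact ⟨⟨u, huv⟩, ⟨fun h ↦ ha (congrArg Subtype.val h), by simp [hab]⟩, by simp⟩
    · exact ⟨⟨b, hbv⟩, ⟨fun h ↦ hab.ne (congrArg Subtype.val h), Or.inl hab⟩, by simp [hbv]⟩

lemma deg_contractEdge_of_ne (htf : G.CliqueFree 3) (he : G.Adj u v) {a : {x : V // x ≠ v}}
    (ha : a.1 ≠ u) : deg (contractEdge G u v) a = deg G a := by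
  rw [deg, ← Set.ncard_image_of_injective _ Subtype.val_injective,
    image_val_neighborSet_contractEdge he.ne ha, deg]
  -- by triangle-freeness `a` is not adjacent to both `u` and `v`
  refine Set.InjOn.ncard_image fun b hb c hc hbc ↦ ?_
  have := not_adj_of_adj_of_cliqueFree htf he (a := a)
  grind [mem_neighborSet]

lemma IsDegMonotonePath.of_map_val_contractEdge (htf : G.CliqueFree 3) (he : G.Adj u v)
    {S : List {x : V // x ≠ v}} (hS : IsDegMonotonePath G (S.map Subtype.val))
    (hu : ∀ a ∈ S, a.1 ≠ u) : IsDegMonotonePath (contractEdge G u v) S := by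
  obtain ⟨hadj, hnodup, hmono⟩ := hS
  refine ⟨?_, hnodup.of_map _, ?_⟩
  · refine (List.isChain_map _ |>.mp hadj).imp_of_mem_imp fun a b _ _ hab ↦ ?_
    exact contractEdge_adj.mpr ⟨fun h ↦ hab.ne (congrArg Subtype.val h), Or.inl hab⟩
  · rw [List.map_congr_left fun a ha ↦ deg_contractEdge_of_ne htf he (hu a ha)]
    rwa [List.map_map] at hmono

variable [Fintype V]

lemma IsDegMonotonePath.append_merged_of_map_val_contractEdge (htf : G.CliqueFree 3)
    (he : G.Adj u v) {S : List {x : V // x ≠ v}} {x : V}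
    (hS : IsDegMonotonePath G (S.map Subtype.val ++ [x])) (hx : x = u ∨ x = v)
    (hu : ∀ a ∈ S, a.1 ≠ u) (hdeg : deg G x ≤ deg G u + deg G v - 2) :
    IsDegMonotonePath (contractEdge G u v) (S ++ [⟨u, he.ne⟩]) := by
  obtain ⟨hS, -, hlast⟩ := isDegMonotonePath_append_singleton.mp hS
  refine isDegMonotonePath_append_singleton.mpr
    ⟨hS.of_map_val_contractEdge htf he hu, fun h ↦ hu _ h rfl, fun a ha ↦ ?_⟩
  obtain ⟨hax, hdegax⟩ := hlast a (by rw [List.getLast?_map]; exact Option.mem_map_of_mem _ ha)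
  have hau := hu a (List.mem_of_mem_getLast? ha)
  refine ⟨contractEdge_adj_merged he hau hx hax, ?_⟩
  rw [deg_contractEdge_of_ne htf he hau, deg_contractEdge_of_eq htf he (a := ⟨u, he.ne⟩) rfl]
  exact hdegax.trans hdeg

lemma IsDegMonotonePath.length_le_mp_contractEdge (htf : G.CliqueFree 3) (he : G.Adj u v)
    {S : List V} (hS : IsDegMonotonePath G S) (havoid : ∀ a ∈ S, a ≠ u ∧ a ≠ v) :
    S.length ≤ mp (contractEdge G u v) := by
  lift S to List {x : V // x ≠ v} using fun a ha ↦ (havoid a ha).2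
  simpa using (hS.of_map_val_contractEdge htf he
    fun a ha ↦ (havoid a (List.mem_map_of_mem ha)).1).length_le_mp

lemma IsDegMonotonePath.length_add_one_le_mp_contractEdge (htf : G.CliqueFree 3)
    (he : G.Adj u v) {S : List V} {x : V} (hS : IsDegMonotonePath G (S ++ [x]))
    (hx : x = u ∨ x = v) (havoid : ∀ a ∈ S, a ≠ u ∧ a ≠ v)
    (hdeg : deg G x ≤ deg G u + deg G v - 2) : S.length + 1 ≤ mp (contractEdge G u v) := by
  lift S to List {x : V // x ≠ v} using fun a ha ↦ (havoid a ha).2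
  simpa using (hS.append_merged_of_map_val_contractEdge htf he hx
    (fun a ha ↦ (havoid a (List.mem_map_of_mem ha)).1) hdeg).length_le_mp

lemma IsDegMonotonePath.length_le_three_mul_mp_contractEdge_of_mem_both
    (htf : G.CliqueFree 3) (he : G.Adj u v) {A M C : List V} {x y : V}
    (hL : IsDegMonotonePath G (A ++ x :: (M ++ y :: C))) (hxy : s(x, y) = s(u, v))
    (hA : ∀ a ∈ A, a ≠ u ∧ a ≠ v) (hM : ∀ a ∈ M, a ≠ u ∧ a ≠ v) :
    (A ++ x :: (M ++ y :: C)).length ≤ 3 * mp (contractEdge G u v) := by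
  have : Nonempty {x : V // x ≠ v} := ⟨⟨u, he.ne⟩⟩
  have hk : 1 ≤ mp (contractEdge G u v) := one_le_mp
  have hxy_adj : G.Adj x y := by rw [← G.mem_edgeSet, hxy]; exact he
  have hx : x = u ∨ x = v := by rw [← Sym2.mem_iff, ← hxy]; exact Sym2.mem_mk_left x y
  have hy : y = u ∨ y = v := by rw [← Sym2.mem_iff, ← hxy]; exact Sym2.mem_mk_right x y
  have hdeg : deg G x + deg G y = deg G u + deg G v := by
    rcases Sym2.eq_iff.mp hxy with ⟨rfl, rfl⟩ | ⟨rfl, rfl⟩ <;> omega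
  have hC : ∀ c ∈ C, c ≠ u ∧ c ≠ v := by
    have hnd := hL.2.1
    simp only [List.nodup_append, List.nodup_cons, List.mem_append, List.mem_cons] at hnd
    rcases Sym2.eq_iff.mp hxy with ⟨rfl, rfl⟩ | ⟨rfl, rfl⟩ <;> grind
  have hCk := (hL.infix ⟨A ++ x :: M ++ [y], [], by simp⟩).length_le_mp_contractEdge htf he hC
  have hAk := (hL.infix ⟨[], x :: (M ++ y :: C), by simp⟩).length_le_mp_contractEdge htf he hA
  cases M with
  | nil =>
    rcases A.eq_nil_or_concat with rfl | ⟨A', a, rfl⟩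
    · simp only [List.nil_append, List.length_cons] at hCk ⊢
      omega
    · have hax : G.Adj a x := by
        simpa using (hL.infix ⟨A', y :: C, by simp⟩ : IsDegMonotonePath G [a, x]).1
      have ha := hA a (by simp)
      have h2 := two_le_mp_of_adj (contractEdge_adj_merged (a := ⟨a, ha.2⟩) he ha.1 hx hax)
      simp only [List.concat_eq_append, List.length_append, List.length_cons, List.length_nil,
        List.nil_append] at hAk ⊢
      omega
  | cons m M =>
    have hxm : G.Adj x m := by
      simpa using (hL.infix ⟨A, M ++ y :: C, by simp⟩ : IsDegMonotonePath G [x, m]).1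
    have hm := hM m List.mem_cons_self
    have hx2 : 2 ≤ deg G x := two_le_deg hxy_adj hxm fun h ↦ by
      rcases hy with rfl | rfl
      exacts [hm.1 h.symm, hm.2 h.symm]
    have hxy_deg : deg G x ≤ deg G y := by
      have hsorted := (hL.infix ⟨A, C, by simp⟩ :
        IsDegMonotonePath G (x :: (m :: M ++ [y]))).2.2.pairwise
      exact List.rel_of_pairwise_cons hsorted (by simp)
    have hAk' := (hL.infix ⟨[], m :: M ++ y :: C, by simp⟩).length_add_one_le_mp_contractEdge
      htf he hx hA (by omega)
    have hMk := (hL.infix ⟨A ++ [x], C, by simp⟩).length_add_one_le_mp_contractEdge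
      htf he hy hM (by omega)
    simp only [List.length_append, List.length_cons] at hAk' hMk hCk ⊢
    omega

lemma IsDegMonotonePath.length_le_three_mul_mp_contractEdge (htf : G.CliqueFree 3)
    (he : G.Adj u v) {L : List V} (hL : IsDegMonotonePath G L) :
    L.length ≤ 3 * mp (contractEdge G u v) := by
  have : Nonempty {x : V // x ≠ v} := ⟨⟨u, he.ne⟩⟩
  have hk : 1 ≤ mp (contractEdge G u v) := one_le_mp
  rcases L.forall_not_or_exists_eq_append_cons (fun a ↦ a = u ∨ a = v) with
    hL₀ | ⟨A, x, R, rfl, hx, hA⟩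
  · simp only [not_or] at hL₀
    have := hL.length_le_mp_contractEdge htf he hL₀
    omega
  simp only [not_or] at hA
  rcases R.forall_not_or_exists_eq_append_cons (fun a ↦ a = u ∨ a = v) with
    hR | ⟨M, y, C, rfl, hy, hM⟩
  · simp only [not_or] at hR
    have hAk := (hL.infix ⟨[], x :: R, by simp⟩).length_le_mp_contractEdge htf he hA
    have hRk := (hL.infix ⟨A ++ [x], [], by simp⟩).length_le_mp_contractEdge htf he hR
    simp only [List.length_append, List.length_cons]
    omega
  simp only [not_or] at hM
  have hxy : s(x, y) = s(u, v) := by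
    have hne : x ≠ y := by
      rintro rfl
      have := hL.2.1
      simp [List.nodup_append] at this
    rcases hx with rfl | rfl <;> rcases hy with rfl | rfl
    exacts [absurd rfl hne, rfl, Sym2.eq_swap, absurd rfl hne]
  exact hL.length_le_three_mul_mp_contractEdge_of_mem_both htf he hxy hA hM

end Contraction

end DegreeMonotonePath

theorem mp_contract_ge {V : Type*} [Fintype V] [DecidableEq V] (G : SimpleGraph V)
    (u v : V) (he : G.Adj u v) (htf : G.CliqueFree 3) :
    (mp G : ℚ) / 3 ≤ (mp (contractEdge G u v) : ℚ) := by
  have : Nonempty V := ⟨u⟩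
  obtain ⟨L, hL, hlen⟩ := DegreeMonotonePath.exists_isDegMonotonePath_length_eq_mp G
  have hmp : mp G ≤ 3 * mp (contractEdge G u v) :=
    hlen ▸ hL.length_le_three_mul_mp_contractEdge htf he
  rw [div_le_iff₀ three_pos]
  exact_mod_cast hmp.trans_eq (mul_comm _ _)
end

section
/- There exist arbitrarily large K4-free graphs G on n vertices containing an edge e such that mp(G) = 4 while mp(G·e) = n − 1. -/
open SimpleGraph

/-!
Take a cycle `x₀ … x_{2k-1}` with `k ≥ 4`, an apex joined to every other vertex, and a hub joined
to the apex and to the odd `xᵢ`. The degrees are `3` (even `xᵢ`), `4` (odd `xᵢ`), `k + 1` (hub) and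
`2k + 1` (apex), and adjacent vertices have different degrees, so every degree monotone path is
strictly monotone and has at most four vertices. Colouring the apex, the odd `xᵢ`, and the rest
shows that the graph is 3-colourable, hence `K₄`-free. Contracting hub–apex leaves a universal
vertex over a cycle of degree-3 vertices, and `x₀, …, x_{2k-1}` followed by the merged vertex is a
degree monotone Hamiltonian path.
-/

open Finset

theorem List.IsChain.and {α : Type*} {R S : α → α → Prop} {l : List α} (hR : l.IsChain R)
    (hS : l.IsChain S) : l.IsChain fun a b => R a b ∧ S a b :=
  List.isChain_iff_getElem.2 fun i h => ⟨hR.getElem i h, hS.getElem i h⟩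

namespace SimpleGraph

section DegreeMonotone

variable {V : Type*} [Fintype V] (G : SimpleGraph V) [DecidableRel G.Adj]

def IsDegreeMonotone (l : List V) : Prop :=
  (l.map fun v => G.degree v).IsChain (· ≤ ·) ∨ (l.map fun v => G.degree v).IsChain (· ≥ ·)

theorem mp_eq_sSup : mp G = sSup {n | ∃ (u v : V) (p : G.Walk u v),
    p.IsPath ∧ G.IsDegreeMonotone p.support ∧ p.support.length = n} := by
  unfold mp IsDegreeMonotone
  congr!

variable {G}

theorem le_mp_of_isChain {l : List V} (hadj : l.IsChain G.Adj) (hnodup : l.Nodup)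
    (hmono : G.IsDegreeMonotone l) : l.length ≤ mp G := by
  rcases eq_or_ne l [] with rfl | hne
  · exact Nat.zero_le _
  have hsupp := Walk.support_ofSupport hne hadj
  rw [mp_eq_sSup]
  refine le_csSup ⟨Fintype.card V, ?_⟩ ⟨_, _, Walk.ofSupport l hne hadj,
    (Walk.isPath_def _).2 (by rwa [hsupp]), by rwa [hsupp], by rw [hsupp]⟩
  rintro _ ⟨_, _, q, hq, -, rfl⟩
  simpa using hq.length_lt

theorem mp_le {m : ℕ} (h : ∀ (u v : V) (p : G.Walk u v), p.IsPath →
    G.IsDegreeMonotone p.support → p.support.length ≤ m) : mp G ≤ m := by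
  rw [mp_eq_sSup]
  refine csSup_le' ?_
  rintro _ ⟨u, v, p, hp, hmono, rfl⟩
  exact h u v p hp hmono

theorem mp_le_card : mp G ≤ Fintype.card V :=
  mp_le fun _ _ _ hp _ => by simpa using hp.length_lt

/-- Where adjacent vertices have distinct degrees, degree monotone paths are strictly monotone. -/
theorem mp_le_card_image_degree (h : ∀ a b, G.Adj a b → G.degree a ≠ G.degree b) :
    mp G ≤ #(univ.image fun v => G.degree v) := by
  refine mp_le fun u v p _ hmono => ?_
  set l := p.support.map fun v => G.degree v
  have hne : l.IsChain (· ≠ ·) := (List.isChain_map _).2 (p.isChain_adj_support.imp h)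
  have hnodup : l.Nodup := by
    rcases hmono with hle | hge
    · exact (List.isChain_iff_pairwise.1
        ((hle.and hne).imp fun _ _ h => lt_of_le_of_ne h.1 h.2)).imp ne_of_lt
    · exact (List.isChain_iff_pairwise.1
        ((hge.and hne).imp fun _ _ h => lt_of_le_of_ne h.1 h.2.symm)).imp ne_of_gt
  calc p.support.length = #l.toFinset := by rw [List.toFinset_card_of_nodup hnodup, List.length_map]
    _ ≤ #(univ.image fun v => G.degree v) := card_le_card fun d hd => by
      obtain ⟨a, -, rfl⟩ := List.mem_map.1 (List.mem_toFinset.1 hd)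
      exact mem_image_of_mem _ (mem_univ a)

end DegreeMonotone

theorem contractEdge_adj_of_isUniversal {V : Type*} {G : SimpleGraph V} {u v : V}
    (hv : G.IsUniversal v) {a b : {x : V // x ≠ v}} :
    (contractEdge G u v).Adj a b ↔ a ≠ b ∧ (G.Adj a b ∨ a = u ∨ b = u) := by
  have hv' : ∀ x : {x : V // x ≠ v}, G.Adj v x := fun x => hv x.2.symm
  simp only [contractEdge, fromRel_adj, hv', (hv' _).symm, and_true, G.adj_comm b.1 a.1]
  tauto

end SimpleGraph

namespace HubbedWheel

def cycSucc (k i : ℕ) : ℕ := if i + 1 = 2 * k then 0 else i + 1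

def cycPred (k i : ℕ) : ℕ := if i = 0 then 2 * k - 1 else i - 1

def rel (k a b : ℕ) : Prop :=
  b = 2 * k + 1 ∨ (a = 2 * k ∧ b < 2 * k ∧ b % 2 = 1) ∨ (a < 2 * k ∧ b < 2 * k ∧ b = cycSucc k a)

/-- Vertices `0, …, 2k-1` form the cycle, `2k` is the hub and `2k+1` the apex. -/
def graph (k : ℕ) : SimpleGraph (Fin (2 * k + 2)) := fromRel fun a b => rel k a b

def hub (k : ℕ) : Fin (2 * k + 2) := ⟨2 * k, by omega⟩

def apex (k : ℕ) : Fin (2 * k + 2) := Fin.last _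

variable {k : ℕ}

theorem adj_iff {a b : Fin (2 * k + 2)} :
    (graph k).Adj a b ↔ a.val ≠ b.val ∧ (rel k a b ∨ rel k b a) := by
  rw [graph, fromRel_adj, Fin.val_ne_iff]

theorem isUniversal_apex : (graph k).IsUniversal (apex k) := by
  intro w hw
  rw [adj_iff]
  simp only [apex, ne_eq, Fin.ext_iff, Fin.val_last, rel, true_or, or_true, and_true] at hw ⊢
  omega

theorem colorable_three : (graph k).Colorable 3 := by
  refine ⟨Coloring.mk
    (fun a => if a.val = 2 * k + 1 then 2 else if a.val % 2 = 1 then 1 else 0) fun {a b} h => ?_⟩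
  rw [adj_iff] at h
  simp only [rel, cycSucc] at h
  split_ifs <;> grind

section Degrees

variable [DecidableRel (graph k).Adj]

theorem degree_apex : (graph k).degree (apex k) = 2 * k + 1 := by
  rw [((graph k).degree_eq_card_sub_one _).2 isUniversal_apex, Fintype.card_fin]
  rfl

theorem degree_of_even (hk : 2 ≤ k) {a : Fin (2 * k + 2)} (ha : a.val < 2 * k)
    (he : a.val % 2 = 0) : (graph k).degree a = 3 := by
  have hnbr : (graph k).neighborFinset a =
      {⟨cycSucc k a, by unfold cycSucc; split_ifs <;> omega⟩,
        ⟨cycPred k a, by unfold cycPred; split_ifs <;> omega⟩, apex k} := by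
    ext b
    simp only [mem_neighborFinset, adj_iff, rel, mem_insert, mem_singleton, Fin.ext_iff,
      Fin.val_last, apex, cycSucc, cycPred]
    grind
  rw [← card_neighborFinset_eq_degree, hnbr, card_eq_three]
  refine ⟨_, _, _, ?_, ?_, ?_, rfl⟩ <;>
    simp only [apex, ne_eq, Fin.ext_iff, Fin.val_last, cycSucc, cycPred] <;> grind

theorem degree_of_odd (hk : 2 ≤ k) {a : Fin (2 * k + 2)} (ha : a.val < 2 * k)
    (ho : a.val % 2 = 1) : (graph k).degree a = 4 := by
  have hnbr : (graph k).neighborFinset a =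
      {⟨cycSucc k a, by unfold cycSucc; split_ifs <;> omega⟩,
        ⟨cycPred k a, by unfold cycPred; split_ifs <;> omega⟩, hub k, apex k} := by
    ext b
    simp only [mem_neighborFinset, adj_iff, rel, mem_insert, mem_singleton, Fin.ext_iff,
      Fin.val_last, hub, apex, cycSucc, cycPred]
    grind
  rw [← card_neighborFinset_eq_degree, hnbr, card_eq_four]
  refine ⟨_, _, _, _, ?_, ?_, ?_, ?_, ?_, ?_, rfl⟩ <;>
    simp only [hub, apex, ne_eq, Fin.ext_iff, Fin.val_last, cycSucc, cycPred] <;> grind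

theorem degree_hub : (graph k).degree (hub k) = k + 1 := by
  have hnbr : (graph k).neighborFinset (hub k) =
      insert (apex k) (univ.image fun j : Fin k => ⟨2 * j + 1, by omega⟩) := by
    ext b
    rw [mem_neighborFinset, adj_iff]
    simp only [rel, mem_insert, mem_image, mem_univ, true_and, Fin.ext_iff, Fin.val_last, hub,
      apex]
    constructor
    · intro h
      by_cases hb : b.val = 2 * k + 1
      · exact Or.inl hb
      · exact Or.inr ⟨⟨b / 2, by grind⟩, by grind⟩
    · grind
  rw [← card_neighborFinset_eq_degree, hnbr, card_insert_of_notMem, card_image_of_injective,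
    card_univ, Fintype.card_fin]
  · intro i j h
    simp only [Fin.mk.injEq] at h
    omega
  · simp only [mem_image, not_exists, Fin.ext_iff, apex, Fin.val_last]
    omega

theorem degree_eq (hk : 2 ≤ k) (a : Fin (2 * k + 2)) :
    (graph k).degree a =
      if a.val < 2 * k then 3 + a.val % 2 else if a.val = 2 * k then k + 1 else 2 * k + 1 := by
  split_ifs with hrim hhub
  · rcases Nat.mod_two_eq_zero_or_one a with h | h
    · rw [degree_of_even hk hrim h, h]
    · rw [degree_of_odd hk hrim h, h]
  · obtain rfl : a = hub k := Fin.ext hhub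
    exact degree_hub
  · obtain rfl : a = apex k := Fin.ext (by simp only [apex, Fin.val_last]; omega)
    exact degree_apex

theorem degree_ne_of_adj (hk : 4 ≤ k) {a b : Fin (2 * k + 2)} (h : (graph k).Adj a b) :
    (graph k).degree a ≠ (graph k).degree b := by
  rw [adj_iff] at h
  simp only [rel, cycSucc] at h
  rw [degree_eq (by omega), degree_eq (by omega)]
  grind

end Degrees

theorem mp_graph (hk : 4 ≤ k) : mp (graph k) = 4 := by
  classical
  refine le_antisymm ((mp_le_card_image_degree fun a b h => degree_ne_of_adj hk h).trans ?_) ?_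
  · refine (card_le_card fun d hd => ?_).trans (card_le_four (a := 3) (b := 4) (c := k + 1)
      (d := 2 * k + 1))
    obtain ⟨a, -, rfl⟩ := mem_image.1 hd
    rw [degree_eq (by omega)]
    simp only [mem_insert, mem_singleton]
    split_ifs <;> omega
  · have hpath := le_mp_of_isChain (G := graph k)
      (l := [⟨0, by omega⟩, ⟨1, by omega⟩, hub k, apex k]) ?_ ?_ ?_
    · simpa using hpath
    · simp only [List.isChain_cons_cons, List.IsChain.singleton, and_true, adj_iff, rel, cycSucc,
        hub, apex, Fin.val_last]
      grind
    · simp only [List.nodup_cons, List.mem_cons, List.not_mem_nil, List.nodup_nil, Fin.ext_iff,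
        hub, apex, Fin.val_last]
      grind
    · left
      simp only [List.map_cons, List.map_nil, List.isChain_cons_cons, List.IsChain.singleton,
        and_true, degree_eq (show 2 ≤ k by omega), hub, apex, Fin.val_last]
      grind

abbrev contracted (k : ℕ) : SimpleGraph {x : Fin (2 * k + 2) // x ≠ apex k} :=
  contractEdge (graph k) (hub k) (apex k)

def contractedHub (k : ℕ) : {x : Fin (2 * k + 2) // x ≠ apex k} :=
  ⟨hub k, by simp [hub, apex, Fin.ext_iff]⟩

theorem card_contracted_verts :
    Fintype.card {x : Fin (2 * k + 2) // x ≠ apex k} = 2 * k + 1 := by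
  simp only [ne_eq, Fintype.card_subtype_compl, Fintype.card_fin, Fintype.card_subtype_eq]
  omega

theorem contracted_adj_iff {a b : {x : Fin (2 * k + 2) // x ≠ apex k}} :
    (contracted k).Adj a b ↔ a.1.val ≠ b.1.val ∧
      (rel k a.1 b.1 ∨ rel k b.1 a.1 ∨ a.1.val = 2 * k ∨ b.1.val = 2 * k) := by
  rw [contractEdge_adj_of_isUniversal isUniversal_apex, adj_iff, ne_eq, Subtype.ext_iff,
    Fin.ext_iff]
  simp only [hub, Fin.ext_iff]
  tauto

section Degrees

variable [DecidableRel (contracted k).Adj]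

theorem degree_contracted_of_lt (hk : 2 ≤ k) {a : {x : Fin (2 * k + 2) // x ≠ apex k}}
    (ha : a.1.val < 2 * k) : (contracted k).degree a = 3 := by
  have hnbr : (contracted k).neighborFinset a =
      {⟨⟨cycSucc k a.1, by unfold cycSucc; split_ifs <;> omega⟩,
          by simp only [apex, ne_eq, Fin.ext_iff, Fin.val_last, cycSucc]; grind⟩,
        ⟨⟨cycPred k a.1, by unfold cycPred; split_ifs <;> omega⟩,
          by simp only [apex, ne_eq, Fin.ext_iff, Fin.val_last, cycPred]; grind⟩,
        contractedHub k} := by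
    ext b
    rw [mem_neighborFinset, contracted_adj_iff]
    have hb := b.2
    simp only [apex, ne_eq, Fin.ext_iff, Fin.val_last] at hb
    simp only [rel, mem_insert, mem_singleton, Subtype.ext_iff, Fin.ext_iff, contractedHub, hub,
      cycSucc, cycPred]
    grind
  rw [← card_neighborFinset_eq_degree, hnbr, card_eq_three]
  refine ⟨_, _, _, ?_, ?_, ?_, rfl⟩ <;>
    simp only [contractedHub, hub, ne_eq, Subtype.ext_iff, Fin.ext_iff, cycSucc, cycPred] <;> grind

theorem degree_contractedHub : (contracted k).degree (contractedHub k) = 2 * k := by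
  rw [((contracted k).degree_eq_card_sub_one _).2, card_contracted_verts, Nat.add_sub_cancel]
  intro b hb
  have hb : b.1.val ≠ 2 * k := fun h => hb (Subtype.ext (Fin.ext h.symm))
  rw [contracted_adj_iff]
  simp only [contractedHub, hub, true_or, or_true, and_true]
  exact hb.symm

theorem three_le_degree_contracted (hk : 2 ≤ k) (a : {x : Fin (2 * k + 2) // x ≠ apex k}) :
    3 ≤ (contracted k).degree a := by
  by_cases ha : a.1.val < 2 * k
  · rw [degree_contracted_of_lt hk ha]
  · have ha' := a.2
    simp only [apex, ne_eq, Fin.ext_iff, Fin.val_last] at ha'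
    obtain rfl : a = contractedHub k :=
      Subtype.ext (Fin.ext (by simp only [contractedHub, hub]; omega))
    rw [degree_contractedHub]
    omega

end Degrees

theorem mp_contracted (hk : 2 ≤ k) : mp (contracted k) = 2 * k + 1 := by
  classical
  set path : Fin (2 * k + 1) → {x : Fin (2 * k + 2) // x ≠ apex k} :=
    fun i => ⟨i.castSucc, by simp only [apex, ne_eq, Fin.ext_iff, Fin.val_castSucc, Fin.val_last]; omega⟩
  refine card_contracted_verts (k := k) ▸ mp_le_card.antisymm ?_
  have hpath := le_mp_of_isChain (G := contracted k) (l := List.ofFn path) ?_ ?_ ?_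
  · simpa using hpath
  · rw [List.isChain_ofFn]
    intro i hi
    rw [contracted_adj_iff]
    simp only [path, Fin.castSucc_mk, rel, cycSucc]
    grind
  · rw [List.nodup_ofFn]
    intro i j h
    simpa [path, Fin.ext_iff] using h
  · left
    rw [List.map_ofFn, List.isChain_ofFn]
    intro i hi
    rw [Function.comp_apply, degree_contracted_of_lt hk (by simp only [path, Fin.castSucc_mk]; omega)]
    exact three_le_degree_contracted hk _

end HubbedWheel

theorem mp_contract_K4free (N : ℕ) :
    ∃ (n : ℕ), N ≤ n ∧ ∃ (G : SimpleGraph (Fin n)) (u v : Fin n),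
      G.CliqueFree 4 ∧ G.Adj u v ∧ mp G = 4 ∧
      mp (contractEdge G u v) = n - 1 := by
  obtain ⟨k, hk, hN⟩ : ∃ k, 4 ≤ k ∧ N ≤ 2 * k + 2 := ⟨max 4 N, le_max_left _ _, by omega⟩
  refine ⟨2 * k + 2, hN, HubbedWheel.graph k, HubbedWheel.hub k, HubbedWheel.apex k,
    HubbedWheel.colorable_three.cliqueFree (by norm_num),
    (HubbedWheel.isUniversal_apex (HubbedWheel.contractedHub k).2.symm).symm,
    HubbedWheel.mp_graph hk, ?_⟩
  rw [HubbedWheel.mp_contracted (by omega)]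
  rfl
end

section
/- Let T be a tree and v a leaf of T. Then mp(T−v) ≤ 2·mp(T), where T−v is the tree obtained by deleting v. -/
/-!
Let `u` be the neighbour of the leaf `v`. Deleting `v` lowers the degree of `u` by one and leaves
every other degree unchanged. A path of `T - v` with nondecreasing degrees that avoids `u` is
therefore such a path of `T`; if it passes through `u`, its part up to `u` stays nondecreasing in
`T` because only its last degree went up, and its part after `u` keeps its degrees. Either way it
is covered by at most two degree monotone paths of `T`.
-/

open SimpleGraph

theorem List.isChain_map_append_singleton_of_eqOn {α β : Type*} [Preorder β] {f g : α → β}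
    {l : List α} {a : α} (hfg : ∀ x ∈ l, f x = g x) (ha : f a ≤ g a)
    (h : IsChain (· ≤ ·) ((l ++ [a]).map f)) : IsChain (· ≤ ·) ((l ++ [a]).map g) := by
  rw [map_append, map_congr_left hfg] at h
  obtain ⟨hl, -, hlast⟩ := isChain_append.1 h
  refine map_append ▸ isChain_append.2 ⟨hl, isChain_singleton _, fun x hx y hy => ?_⟩
  obtain rfl : g a = y := by simpa using hy
  exact (hlast x hx (f a) (by simp)).trans ha

namespace SimpleGraph

variable {V W : Type*} {G : SimpleGraph V} {H : SimpleGraph W}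

theorem le_mp [Fintype V] [DecidableRel G.Adj] {a b : V} {p : G.Walk a b} (hp : p.IsPath)
    (h : List.IsChain (· ≤ ·) (p.support.map fun x => G.degree x)) :
    p.support.length ≤ mp G := by
  classical
  refine le_csSup ⟨Fintype.card V, ?_⟩ ⟨a, b, p, hp, .inl ?_, rfl⟩
  · rintro n ⟨x, y, q, hq, -, rfl⟩
    exact hq.support_nodup.length_le_card
  · convert h using 3
    congr!

theorem mp_le_s14 [Fintype W] [DecidableRel H.Adj] {n : ℕ}
    (h : ∀ (a b : W) (p : H.Walk a b), p.IsPath →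
      List.IsChain (· ≤ ·) (p.support.map fun x => H.degree x) → p.support.length ≤ n) :
    mp H ≤ n := by
  classical
  refine csSup_le' ?_
  rintro _ ⟨a, b, p, hp, hmono | hanti, rfl⟩
  · exact h a b p hp (by convert hmono using 3; congr!)
  · simpa using h b a p.reverse hp.reverse (by
      rw [Walk.support_reverse, List.map_reverse, List.isChain_reverse]
      convert hanti using 3; congr!)

theorem Copy.length_support_le_mp [Fintype V] [DecidableRel G.Adj] (f : Copy H G)
    {a b : W} {p : H.Walk a b} (hp : p.IsPath)
    (h : List.IsChain (· ≤ ·) (p.support.map fun x => G.degree (f x))) :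
    p.support.length ≤ mp G := by
  simpa using le_mp (p := p.map f.toHom) (hp.map f.injective) (by simpa [Walk.support_map])

theorem Copy.length_support_tail_le_mp [Fintype V] [DecidableRel G.Adj] (f : Copy H G)
    {a b : W} {p : H.Walk a b} (hp : p.IsPath)
    (h : List.IsChain (· ≤ ·) (p.support.tail.map fun x => G.degree (f x))) :
    p.support.tail.length ≤ mp G := by
  cases p with
  | nil => simp
  | cons _ q => simpa using f.length_support_le_mp hp.of_cons (by simpa using h)

theorem Copy.mp_le_two_mul [Fintype V] [Fintype W] [DecidableEq W] [DecidableRel G.Adj]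
    [DecidableRel H.Adj] (f : Copy H G) (u : W)
    (hf : ∀ x ≠ u, H.degree x = G.degree (f x)) : mp H ≤ 2 * mp G := by
  refine mp_le_s14 fun a b p hp hmono => ?_
  by_cases hu : u ∈ p.support
  swap
  · have := f.length_support_le_mp hp <| by
      rwa [List.map_congr_left fun x hx => hf x (ne_of_mem_of_not_mem hx hu)] at hmono
    omega
  set p₁ := p.takeUntil u hu
  set p₂ := p.dropUntil u hu
  have hsplit : p.support = p₁.support.dropLast ++ [u] ++ p₂.support.tail := by
    rw [p₁.dropLast_support_concat, ← Walk.support_append, Walk.take_spec]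
  have hnodup := hsplit ▸ hp.support_nodup
  have hu₁ : u ∉ p₁.support.dropLast := fun h =>
    List.nodup_append.1 (List.nodup_append.1 hnodup).1 |>.2.2 u h u (by simp) rfl
  have hu₂ : u ∉ p₂.support.tail := fun h =>
    (List.nodup_append.1 hnodup).2.2 u (by simp) u h rfl
  rw [hsplit, List.map_append] at hmono
  have h₁ : p₁.support.length ≤ mp G := by
    refine f.length_support_le_mp (hp.takeUntil hu) ?_
    rw [← p₁.dropLast_support_concat]
    exact List.isChain_map_append_singleton_of_eqOn
      (fun x hx => hf x (ne_of_mem_of_not_mem hx hu₁)) (f.degree_le u) hmono.left_of_append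
  have h₂ : p₂.support.tail.length ≤ mp G := by
    refine f.length_support_tail_le_mp (hp.dropUntil hu) ?_
    rw [← List.map_congr_left fun x hx => hf x (ne_of_mem_of_not_mem hx hu₂)]
    exact hmono.right_of_append
  have : p.support.length = p₁.support.length + p₂.support.tail.length := by
    rw [hsplit, p₁.dropLast_support_concat, List.length_append]
  omega

end SimpleGraph

theorem mp_tree_delete_leaf_le_general {V : Type*} [Fintype V] [DecidableEq V]
    (T : SimpleGraph V) [DecidableRel T.Adj]
    (v : V) (hv : T.degree v = 1) :
    mp (T.induce {x : V | x ≠ v}) ≤ 2 * mp T := by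
  obtain ⟨u, hvu, hu⟩ := degree_eq_one_iff_existsUnique_adj.mp hv
  refine (Copy.induce T _).mp_le_two_mul ⟨u, hvu.ne'⟩ fun x hx =>
    degree_induce_of_neighborSet_subset fun y hxy (hyv : y = v) =>
      hx (Subtype.ext (hu x (hyv ▸ hxy.symm)))

theorem mp_tree_delete_leaf_le {V : Type*} [Fintype V] [DecidableEq V]
    (T : SimpleGraph V) [DecidableRel T.Adj] (hT : T.IsTree)
    (v : V) (hv : T.degree v = 1) :
    mp (T.induce {x : V | x ≠ v}) ≤ 2 * mp T :=
  mp_tree_delete_leaf_le_general T v hv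
end

section
/- For every k ≥ 2 there exists a tree T with mp(T) = k and a leaf addition v such that mp(T+v) = 2k. -/
/-!
The tree is a caterpillar: a spine `0, 1, …, 2k` with a pendant leaf at every inner spine vertex
except the middle one `k`. Its vertices of degree 3 are the inner spine vertices other than `k`,
every edge has such an endpoint, and all other vertices have degree at most 2. So along a degree
monotone path only an end vertex can have degree below 3, and the other vertices form a path of
degree-3 vertices, which cannot pass `k` and hence has at most `k - 1` vertices; the spine segment
`0, …, k - 1` attains `k`. A leaf attached at `k` raises its degree to 3, so all `2k - 1` inner
spine vertices have degree 3 and the same argument gives `2k`, attained by `0, …, 2k - 1`.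
-/

open SimpleGraph

/-- The graph obtained from `G` by adding a new vertex `none` joined to the vertices in `S`. -/
def addVertex {V : Type*} (G : SimpleGraph V) (S : Set V) : SimpleGraph (Option V) :=
  SimpleGraph.fromRel (fun a b =>
    (∃ x y, a = some x ∧ b = some y ∧ G.Adj x y) ∨ (a = none ∧ ∃ x ∈ S, b = some x))

lemma degree_eq_ncard_neighborSet {V : Type*} (G : SimpleGraph V) (v : V)
    [Fintype (G.neighborSet v)] : G.degree v = (G.neighborSet v).ncard := by
  rw [← card_neighborSet_eq_degree, ← Nat.card_eq_fintype_card, Nat.card_coe_set_eq]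

section AddVertex

variable {V : Type*} (G : SimpleGraph V) (S : Set V)

@[simp]
lemma addVertex_adj_some_some {a b : V} : (addVertex G S).Adj (some a) (some b) ↔ G.Adj a b := by
  simpa [addVertex, G.adj_comm b a] using fun h : G.Adj a b => G.ne_of_adj h

@[simp]
lemma addVertex_adj_none_some {b : V} : (addVertex G S).Adj none (some b) ↔ b ∈ S := by
  simp [addVertex]

@[simp]
lemma addVertex_adj_some_none {a : V} : (addVertex G S).Adj (some a) none ↔ a ∈ S := by
  simp [addVertex]

lemma addVertex_neighborSet_none : (addVertex G S).neighborSet none = some '' S := by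
  ext (_ | b) <;> simp

lemma addVertex_neighborSet_some_of_mem {a : V} (ha : a ∈ S) :
    (addVertex G S).neighborSet (some a) = insert none (some '' G.neighborSet a) := by
  ext (_ | b) <;> simp [ha]

lemma addVertex_neighborSet_some_of_notMem {a : V} (ha : a ∉ S) :
    (addVertex G S).neighborSet (some a) = some '' G.neighborSet a := by
  ext (_ | b) <;> simp [ha]

lemma degree_addVertex_none [Fintype ((addVertex G S).neighborSet none)] :
    (addVertex G S).degree none = S.ncard := by
  rw [degree_eq_ncard_neighborSet, addVertex_neighborSet_none,
    Set.ncard_image_of_injective _ (Option.some_injective V)]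

lemma degree_addVertex_some_of_mem {a : V} [Fintype (G.neighborSet a)]
    [Fintype ((addVertex G S).neighborSet (some a))] (ha : a ∈ S) :
    (addVertex G S).degree (some a) = G.degree a + 1 := by
  rw [degree_eq_ncard_neighborSet, degree_eq_ncard_neighborSet,
    addVertex_neighborSet_some_of_mem G S ha, Set.ncard_insert_of_notMem (by simp),
    Set.ncard_image_of_injective _ (Option.some_injective V)]

lemma degree_addVertex_some_of_notMem {a : V} [Fintype (G.neighborSet a)]
    [Fintype ((addVertex G S).neighborSet (some a))] (ha : a ∉ S) :
    (addVertex G S).degree (some a) = G.degree a := by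
  rw [degree_eq_ncard_neighborSet, degree_eq_ncard_neighborSet,
    addVertex_neighborSet_some_of_notMem G S ha,
    Set.ncard_image_of_injective _ (Option.some_injective V)]

end AddVertex

section MonotoneChains

variable {α : Type*} {R : α → α → Prop} {d : α → ℕ} {Δ B : ℕ}

def MonotoneAlong (d : α → ℕ) (l : List α) : Prop :=
  (l.map d).IsChain (· ≤ ·) ∨ (l.map d).IsChain (· ≥ ·)

lemma forall_mem_tail_le_of_isChain (hR : ∀ a b, R a b → Δ ≤ d a ∨ Δ ≤ d b) :
    ∀ {l : List α}, l.IsChain R → (l.map d).IsChain (· ≤ ·) → ∀ v ∈ l.tail, Δ ≤ d v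
  | [], _, _ => by simp
  | [_], _, _ => by simp
  | a :: b :: t, hl, hmono => by
    have hsorted := List.isChain_iff_pairwise.1 hmono
    simp only [List.map_cons, List.pairwise_cons, List.mem_cons, List.mem_map,
      forall_eq_or_imp, forall_exists_index, and_imp, forall_apply_eq_imp_iff₂] at hsorted
    intro v hv
    rw [List.tail_cons, List.mem_cons] at hv
    rcases hR a b (List.isChain_cons_cons.1 hl).1 with ha | hb <;> rcases hv with rfl | hv
    · exact ha.trans hsorted.1.1
    · exact ha.trans (hsorted.1.2 v hv)
    · exact hb
    · exact hb.trans (hsorted.2.1 v hv)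

lemma MonotoneAlong.length_le_succ (hsymm : ∀ a b, R a b → R b a)
    (hR : ∀ a b, R a b → Δ ≤ d a ∨ Δ ≤ d b)
    (hhigh : ∀ l : List α, l.Nodup → l.IsChain R → (∀ v ∈ l, Δ ≤ d v) → l.length ≤ B)
    {l : List α} (hmono : MonotoneAlong d l) (hnd : l.Nodup) (hl : l.IsChain R) :
    l.length ≤ B + 1 := by
  have key : ∀ l : List α, l.Nodup → l.IsChain R → (l.map d).IsChain (· ≤ ·) →
      l.length ≤ B + 1 := fun l hnd hl hmono => by
    have := hhigh l.tail (hnd.sublist l.tail_sublist) hl.tail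
      (forall_mem_tail_le_of_isChain hR hl hmono)
    rw [List.length_tail] at this
    omega
  rcases hmono with hmono | hmono
  · exact key l hnd hl hmono
  · simpa using key l.reverse (List.nodup_reverse.2 hnd)
      (List.isChain_reverse.2 (hl.imp fun a b h => hsymm a b h))
      (by rwa [List.map_reverse, List.isChain_reverse])

end MonotoneChains

section DegreeMonotonePaths

variable {V : Type*} [Fintype V] {G : SimpleGraph V} [DecidableRel G.Adj]

lemma mp_eq {m : ℕ}
    (hex : ∃ (u v : V) (p : G.Walk u v), p.IsPath ∧ MonotoneAlong (G.degree ·) p.support ∧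
      p.support.length = m)
    (hle : ∀ (u v : V) (p : G.Walk u v), p.IsPath → MonotoneAlong (G.degree ·) p.support →
      p.support.length ≤ m) :
    mp G = m := by
  have hgreatest : IsGreatest {n | ∃ (u v : V) (p : G.Walk u v), p.IsPath ∧
      MonotoneAlong (G.degree ·) p.support ∧ p.support.length = n} m :=
    ⟨hex, by rintro _ ⟨u, v, p, hp, hmono, rfl⟩; exact hle u v p hp hmono⟩
  rw [← hgreatest.csSup_eq, mp]
  -- `mp` is stated with classical decidability instances; `congr!` identifies them with ours.
  congr!
  unfold MonotoneAlong
  congr!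

theorem mp_eq_of_high_degree_bound {Δ B : ℕ}
    (hadj : ∀ a b, G.Adj a b → Δ ≤ G.degree a ∨ Δ ≤ G.degree b)
    (hhigh : ∀ l : List V, l.Nodup → l.IsChain G.Adj → (∀ v ∈ l, Δ ≤ G.degree v) → l.length ≤ B)
    {l : List V} (hnd : l.Nodup) (hl : l.IsChain G.Adj) (hmono : MonotoneAlong (G.degree ·) l)
    (hlen : l.length = B + 1) : mp G = B + 1 := by
  have hne : l ≠ [] := List.ne_nil_of_length_pos (by omega)
  refine mp_eq ⟨_, _, Walk.ofSupport l hne hl, ?_⟩ fun _ _ p hp hpmono =>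
    hpmono.length_le_succ (fun _ _ h => h.symm) hadj hhigh hp.support_nodup p.isChain_adj_support
  rw [Walk.isPath_def, Walk.support_ofSupport]
  exact ⟨hnd, hmono, hlen⟩

end DegreeMonotonePaths

section NatLists

lemma forall_lt_or_forall_gt_of_isChain {m : ℕ} :
    ∀ {l : List ℕ}, l.IsChain (fun a b => a + 1 = b ∨ b + 1 = a) → m ∉ l →
      (∀ a ∈ l, a < m) ∨ ∀ a ∈ l, m < a
  | [], _, _ => by simp
  | [a], _, hm => by
    rw [List.mem_singleton] at hm
    simp only [List.mem_singleton, forall_eq]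
    omega
  | a :: b :: t, hl, hm => by
    obtain ⟨hab, hl⟩ := List.isChain_cons_cons.1 hl
    obtain ⟨ham, hm⟩ := not_or.1 (List.mem_cons.not.1 hm)
    rcases forall_lt_or_forall_gt_of_isChain hl hm with h | h
    · have := h b List.mem_cons_self
      exact .inl (List.forall_mem_cons.2 ⟨by omega, h⟩)
    · have := h b List.mem_cons_self
      exact .inr (List.forall_mem_cons.2 ⟨by omega, h⟩)

lemma List.Nodup.length_le_of_forall_mem {l : List ℕ} (hnd : l.Nodup) {a b : ℕ}
    (h : ∀ x ∈ l, a ≤ x ∧ x < b) : l.length ≤ b - a := by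
  simpa using (hnd.subperm fun x hx => List.mem_range'_1.2 (by have := h x hx; omega :
    a ≤ x ∧ x < a + (b - a))).length_le

lemma List.Nodup.length_le_of_forall_mem_some {n a b : ℕ} {l : List (Option (Fin n))}
    (hnd : l.Nodup) (h : ∀ w ∈ l, ∃ v : Fin n, w = some v ∧ a ≤ v.val ∧ v.val < b) :
    l.length ≤ b - a := by
  have hsub : l.map (Option.map Fin.val) ⊆ (List.range' a (b - a)).map some := by
    intro y hy
    obtain ⟨w, hw, rfl⟩ := List.mem_map.1 hy
    obtain ⟨v, rfl, hv⟩ := h w hw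
    simp only [Option.map_some, List.mem_map, List.mem_range'_1, Option.some.injEq,
      exists_eq_right]
    omega
  simpa using ((hnd.map (Option.map_injective Fin.val_injective)).subperm hsub).length_le

end NatLists

section LowerNeighbors

variable {V : Type*} [LinearOrder V] {G : SimpleGraph V}

lemma isAcyclic_of_lower_neighbor_unique
    (h : ∀ ⦃v a b : V⦄, G.Adj v a → G.Adj v b → a < v → b < v → a = b) : G.IsAcyclic := by
  classical
  intro u c hc
  -- The largest vertex of a cycle has two distinct smaller neighbours on it.
  obtain ⟨a, ha, hmax⟩ := c.support.toFinset.exists_max_image id ⟨u, by simp⟩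
  rw [List.mem_toFinset] at ha
  have hrot : (c.rotate a ha).IsCycle := (Walk.isCycle_rotate ha).2 hc
  have hlt : ∀ w, G.Adj a w → w ∈ (c.rotate a ha).support → w < a := fun w hw hmem =>
    lt_of_le_of_ne (hmax w (by simpa using hmem)) hw.ne'
  have hsnd := (c.rotate a ha).adj_snd hrot.not_nil
  have hpen := ((c.rotate a ha).adj_penultimate hrot.not_nil).symm
  exact hrot.snd_ne_penultimate <| h hsnd hpen (hlt _ hsnd ((c.rotate a ha).getVert_mem_support _))
    (hlt _ hpen ((c.rotate a ha).getVert_mem_support _))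

lemma reachable_of_exists_lower_neighbor [WellFoundedLT V] {r : V}
    (h : ∀ v, v ≠ r → ∃ u < v, G.Adj v u) (v : V) : G.Reachable v r := by
  induction v using WellFoundedLT.induction with
  | _ v ih =>
    by_cases hv : v = r
    · exact hv ▸ .refl _
    · obtain ⟨u, hu, hadj⟩ := h v hv
      exact hadj.reachable.trans (ih u hu)

lemma isTree_of_exists_unique_lower_neighbor [WellFoundedLT V] (r : V)
    (hex : ∀ v, v ≠ r → ∃ u < v, G.Adj v u)
    (huniq : ∀ ⦃v a b : V⦄, G.Adj v a → G.Adj v b → a < v → b < v → a = b) : G.IsTree :=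
  ⟨(connected_iff G).2 ⟨fun v w => (reachable_of_exists_lower_neighbor hex v).trans
      (reachable_of_exists_lower_neighbor hex w).symm, ⟨r⟩⟩,
    isAcyclic_of_lower_neighbor_unique huniq⟩

end LowerNeighbors

def parentGraph (n : ℕ) (p : ℕ → ℕ) : SimpleGraph (Fin n) :=
  fromRel fun a b => a.val ≠ 0 ∧ b.val = p a.val

section ParentGraph

variable {n : ℕ} {p : ℕ → ℕ}

lemma parentGraph_adj (hp : ∀ a, a ≠ 0 → p a < a) {a b : Fin n} :
    (parentGraph n p).Adj a b ↔ (a.val ≠ 0 ∧ b.val = p a) ∨ (b.val ≠ 0 ∧ a.val = p b) := by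
  rw [parentGraph, fromRel_adj, and_iff_right_iff_imp]
  rintro (⟨ha, hb⟩ | ⟨hb, ha⟩) rfl
  · exact (hp _ ha).ne' hb
  · exact (hp _ hb).ne' ha

lemma parentGraph_isTree (hp : ∀ a, a ≠ 0 → p a < a) (hn : n ≠ 0) :
    (parentGraph n p).IsTree := by
  refine isTree_of_exists_unique_lower_neighbor ⟨0, Nat.pos_of_ne_zero hn⟩ (fun v hv => ?_) ?_
  · have hv0 : v.val ≠ 0 := fun h => hv (Fin.ext h)
    exact ⟨⟨p v, (hp _ hv0).trans v.isLt⟩, hp _ hv0, (parentGraph_adj hp).2 (.inl ⟨hv0, rfl⟩)⟩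
  · intro v a b ha hb hav hbv
    rw [parentGraph_adj hp] at ha hb
    rw [Fin.lt_def] at hav hbv
    have := hp a
    have := hp b
    ext
    omega

lemma parentGraph_degree (hp : ∀ a, a ≠ 0 → p a < a) (v : Fin n)
    [Fintype ((parentGraph n p).neighborSet v)] :
    (parentGraph n p).degree v =
      ((Finset.range n).filter fun b => (v.val ≠ 0 ∧ b = p v) ∨ (b ≠ 0 ∧ v.val = p b)).card := by
  rw [degree_eq_ncard_neighborSet, ← Set.ncard_image_of_injective _ Fin.val_injective,
    ← Set.ncard_coe_finset]
  congr 1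
  ext b
  simp only [Set.mem_image, mem_neighborSet, parentGraph_adj hp, Finset.coe_filter,
    Finset.mem_range]
  constructor
  · rintro ⟨b, hb, rfl⟩
    exact ⟨b.isLt, hb⟩
  · rintro ⟨hb, h⟩
    exact ⟨⟨b, hb⟩, h, rfl⟩

end ParentGraph

/-- Vertices `0, …, 2k` form the spine; the leaves `2k + 1, …, 3k - 1` hang at `1, …, k - 1` and
the leaves `3k, …, 4k - 2` at `k + 1, …, 2k - 1`. -/
def caterpillarParent (k a : ℕ) : ℕ :=
  if a ≤ 2 * k then a - 1 else if a < 3 * k then a - 2 * k else a - 2 * k + 1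

def caterpillar (k : ℕ) : SimpleGraph (Fin (4 * k - 1)) :=
  parentGraph (4 * k - 1) (caterpillarParent k)

def caterpillarDegree (k v : ℕ) : ℕ :=
  if v = k then 2 else if 0 < v ∧ v < 2 * k then 3 else 1

section Caterpillar

variable {k : ℕ}

lemma caterpillarParent_lt (hk : k ≠ 0) {a : ℕ} (ha : a ≠ 0) : caterpillarParent k a < a := by
  unfold caterpillarParent
  split_ifs <;> omega

lemma caterpillar_adj (hk : k ≠ 0) {a b : Fin (4 * k - 1)} :
    (caterpillar k).Adj a b ↔
      (a.val ≠ 0 ∧ b.val = caterpillarParent k a) ∨ (b.val ≠ 0 ∧ a.val = caterpillarParent k b) :=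
  parentGraph_adj fun _ => caterpillarParent_lt hk

lemma caterpillar_isTree (hk : k ≠ 0) : (caterpillar k).IsTree :=
  parentGraph_isTree (fun _ => caterpillarParent_lt hk) (by omega)

lemma caterpillar_adj_spine (hk : k ≠ 0) {a b : Fin (4 * k - 1)} (h : (caterpillar k).Adj a b)
    (ha : a.val ≤ 2 * k) (hb : b.val ≤ 2 * k) : a.val + 1 = b.val ∨ b.val + 1 = a.val := by
  rw [caterpillar_adj hk] at h
  unfold caterpillarParent at h
  split_ifs at h
  omega

lemma caterpillar_adj_inner (hk : 2 ≤ k) {a b : Fin (4 * k - 1)} (h : (caterpillar k).Adj a b) :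
    (0 < a.val ∧ a.val < 2 * k ∧ a.val ≠ k) ∨ (0 < b.val ∧ b.val < 2 * k ∧ b.val ≠ k) := by
  have := a.isLt
  have := b.isLt
  rw [caterpillar_adj (by omega)] at h
  unfold caterpillarParent at h
  split_ifs at h <;> omega

lemma isChain_caterpillar_spine (hk : k ≠ 0) {m : ℕ} (hm : m ≤ 4 * k - 1) (hm' : m ≤ 2 * k + 1) :
    (List.ofFn (Fin.castLE hm)).IsChain (caterpillar k).Adj :=
  List.isChain_ofFn.2 fun i hi => (caterpillar_adj hk).2 <| .inr
    ⟨by simp, by simp only [Fin.val_castLE, caterpillarParent]; split_ifs <;> omega⟩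

lemma caterpillar_degree (hk : 2 ≤ k) (v : Fin (4 * k - 1))
    [Fintype ((caterpillar k).neighborSet v)] :
    (caterpillar k).degree v = caterpillarDegree k v := by
  refine (@parentGraph_degree _ (caterpillarParent k) (fun _ => caterpillarParent_lt (by omega)) v
    ‹_›).trans ?_
  have hv := v.isLt
  unfold caterpillarDegree
  split_ifs with hmid hinner
  · rw [Finset.card_eq_two]
    refine ⟨k - 1, k + 1, by omega, ?_⟩
    ext b
    simp only [Finset.mem_filter, Finset.mem_range, Finset.mem_insert, Finset.mem_singleton]
    unfold caterpillarParent
    split_ifs <;> omega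
  · rw [Finset.card_eq_three]
    refine ⟨v - 1, v + 1, if v.val < k then v + 2 * k else v + 2 * k - 1, by omega,
      by split_ifs <;> omega, by split_ifs <;> omega, ?_⟩
    ext b
    simp only [Finset.mem_filter, Finset.mem_range, Finset.mem_insert, Finset.mem_singleton]
    unfold caterpillarParent
    split_ifs <;> omega
  · rw [Finset.card_eq_one]
    refine ⟨if v.val = 0 then 1 else caterpillarParent k v, ?_⟩
    ext b
    simp only [Finset.mem_filter, Finset.mem_range, Finset.mem_singleton]
    unfold caterpillarParent
    split_ifs <;> omega

lemma three_le_caterpillarDegree_iff {v : ℕ} :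
    3 ≤ caterpillarDegree k v ↔ 0 < v ∧ v < 2 * k ∧ v ≠ k := by
  unfold caterpillarDegree
  split_ifs <;> omega

lemma length_le_of_isChain_caterpillar (hk : 2 ≤ k) {l : List (Fin (4 * k - 1))} (hnd : l.Nodup)
    (hl : l.IsChain (caterpillar k).Adj)
    (hinner : ∀ v ∈ l, 0 < v.val ∧ v.val < 2 * k ∧ v.val ≠ k) : l.length ≤ k - 1 := by
  have hvals : (l.map Fin.val).IsChain fun a b => a + 1 = b ∨ b + 1 = a :=
    (List.isChain_map _).2 <| hl.imp_of_mem_imp fun a b ha hb h =>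
      caterpillar_adj_spine (by omega) h (hinner a ha).2.1.le (hinner b hb).2.1.le
  have hk_notMem : k ∉ l.map Fin.val := by
    simpa using fun v hv => (hinner v hv).2.2
  have hndv := hnd.map Fin.val_injective
  rw [← List.length_map Fin.val]
  -- A path through degree-3 vertices cannot pass the middle vertex `k`.
  rcases forall_lt_or_forall_gt_of_isChain hvals hk_notMem with h | h
  · have := hndv.length_le_of_forall_mem (a := 1) (b := k) fun x hx => by
      obtain ⟨v, hv, rfl⟩ := List.mem_map.1 hx
      exact ⟨(hinner v hv).1, h _ hx⟩
    omega
  · have := hndv.length_le_of_forall_mem (a := k + 1) (b := 2 * k) fun x hx => by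
      obtain ⟨v, hv, rfl⟩ := List.mem_map.1 hx
      exact ⟨h _ hx, (hinner v hv).2.1⟩
    omega

theorem mp_caterpillar (hk : 2 ≤ k) : mp (caterpillar k) = k := by
  classical
  have hhigh (v : Fin (4 * k - 1)) :
      3 ≤ (caterpillar k).degree v ↔ 0 < v.val ∧ v.val < 2 * k ∧ v.val ≠ k := by
    rw [caterpillar_degree hk, three_le_caterpillarDegree_iff]
  have hkle : k ≤ 4 * k - 1 := by omega
  have := mp_eq_of_high_degree_bound (Δ := 3) (B := k - 1) (l := List.ofFn (Fin.castLE hkle))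
    (fun a b h => by simpa only [hhigh] using caterpillar_adj_inner hk h)
    (fun l hnd hl hl3 =>
      length_le_of_isChain_caterpillar hk hnd hl fun v hv => (hhigh v).1 (hl3 v hv))
    (List.nodup_ofFn_ofInjective (Fin.castLE_injective hkle))
    (isChain_caterpillar_spine (by omega) hkle (by omega))
    (.inl <| by
      rw [List.map_ofFn, List.isChain_ofFn]
      intro i hi
      simp only [Function.comp_apply, caterpillar_degree hk, Fin.val_castLE, caterpillarDegree]
      split_ifs <;> omega)
    (by rw [List.length_ofFn]; omega)
  omega

end Caterpillar

section AddLeaf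

variable {k : ℕ} {x : Fin (4 * k - 1)}

lemma degree_addVertex_caterpillar_some (hk : 2 ≤ k) (hx : x.val = k) (a : Fin (4 * k - 1))
    [Fintype ((addVertex (caterpillar k) {x}).neighborSet (some a))] :
    (addVertex (caterpillar k) {x}).degree (some a) =
      if 0 < a.val ∧ a.val < 2 * k then 3 else 1 := by
  classical
  by_cases hax : a = x
  · rw [degree_addVertex_some_of_mem _ _ (Set.mem_singleton_iff.2 hax), caterpillar_degree hk,
      caterpillarDegree, if_pos (by rw [hax, hx]), if_pos (by omega)]
  · have : a.val ≠ k := fun h => hax (Fin.ext (h.trans hx.symm))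
    rw [degree_addVertex_some_of_notMem _ _ (Set.mem_singleton_iff.not.2 hax),
      caterpillar_degree hk]
    unfold caterpillarDegree
    split_ifs <;> omega

lemma three_le_degree_addVertex_caterpillar_iff (hk : 2 ≤ k) (hx : x.val = k)
    (w : Option (Fin (4 * k - 1))) [Fintype ((addVertex (caterpillar k) {x}).neighborSet w)] :
    3 ≤ (addVertex (caterpillar k) {x}).degree w ↔
      ∃ a : Fin (4 * k - 1), w = some a ∧ 1 ≤ a.val ∧ a.val < 2 * k := by
  rcases w with _ | a
  · simp [degree_addVertex_none]
  · rw [degree_addVertex_caterpillar_some hk hx]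
    simp only [Option.some.injEq, exists_eq_left']
    split_ifs <;> omega

lemma addVertex_caterpillar_adj_inner (hk : 2 ≤ k) (hx : x.val = k)
    {w w' : Option (Fin (4 * k - 1))} (h : (addVertex (caterpillar k) {x}).Adj w w') :
    (∃ a : Fin (4 * k - 1), w = some a ∧ 1 ≤ a.val ∧ a.val < 2 * k) ∨
      ∃ a : Fin (4 * k - 1), w' = some a ∧ 1 ≤ a.val ∧ a.val < 2 * k := by
  rcases w with _ | a <;> rcases w' with _ | b
  · exact absurd h (addVertex _ _).irrefl
  · rw [addVertex_adj_none_some, Set.mem_singleton_iff] at h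
    exact .inr ⟨b, rfl, by omega⟩
  · rw [addVertex_adj_some_none, Set.mem_singleton_iff] at h
    exact .inl ⟨a, rfl, by omega⟩
  · rcases caterpillar_adj_inner hk ((addVertex_adj_some_some _ _).1 h) with h | h
    · exact .inl ⟨a, rfl, h.1, h.2.1⟩
    · exact .inr ⟨b, rfl, h.1, h.2.1⟩

theorem mp_addVertex_caterpillar (hk : 2 ≤ k) (hx : x.val = k) :
    mp (addVertex (caterpillar k) {x}) = 2 * k := by
  classical
  have hhigh := three_le_degree_addVertex_caterpillar_iff hk hx
  have h2k : 2 * k ≤ 4 * k - 1 := by omega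
  have := mp_eq_of_high_degree_bound (G := addVertex (caterpillar k) {x}) (Δ := 3)
    (B := 2 * k - 1) (l := (List.ofFn (Fin.castLE h2k)).map some)
    (fun a b h => by simpa only [hhigh] using addVertex_caterpillar_adj_inner hk hx h)
    (fun l hnd _ hl3 => hnd.length_le_of_forall_mem_some fun w hw => (hhigh w).1 (hl3 w hw))
    ((List.nodup_ofFn_ofInjective (Fin.castLE_injective h2k)).map (Option.some_injective _))
    ((List.isChain_map _).2 <| (isChain_caterpillar_spine (by omega) h2k (by omega)).imp
      fun _ _ h => (addVertex_adj_some_some _ _).2 h)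
    (.inl <| by
      rw [List.map_map, List.map_ofFn, List.isChain_ofFn]
      intro i hi
      simp only [Function.comp_apply, degree_addVertex_caterpillar_some hk hx, Fin.val_castLE]
      split_ifs <;> omega)
    (by rw [List.length_map, List.length_ofFn]; omega)
  omega

end AddLeaf

theorem mp_tree_add_leaf_sharp (k : ℕ) (hk : 2 ≤ k) :
    ∃ (n : ℕ) (T : SimpleGraph (Fin n)) (x : Fin n),
      T.IsTree ∧ mp T = k ∧ mp (addVertex T {x}) = 2 * k :=
  ⟨4 * k - 1, caterpillar k, ⟨k, by omega⟩, caterpillar_isTree (by omega), mp_caterpillar hk,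
    mp_addVertex_caterpillar hk rfl⟩
end

section
/- For connected graphs G and H, mp(G □ H) ≥ mp(G) + mp(H) − 1, where □ denotes the Cartesian product. -/
open SimpleGraph

/-
Take longest degree monotone paths, `p` from `u` to `v` in `G` and `q` from `w` to `x` in `H`,
oriented so that degrees do not decrease. Follow `p` in the layer `G × {w}`, then `q` in the layer `{v} × H`.
The two pieces meet only at `(v, w)`, so this is a path with `mp G + mp H - 1` vertices, and since
`deg (a, b) = deg a + deg b` its degrees `deg pᵢ + deg w`, then `deg v + deg qⱼ`, never decrease.
-/

namespace SimpleGraph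

variable {V W α : Type*} {G : SimpleGraph V} {H : SimpleGraph W}

namespace Walk

theorem isChain_map_support_iff_forall_darts {R : α → α → Prop} (f : V → α) {u v : V}
    (p : G.Walk u v) :
    (p.support.map f).IsChain R ↔ ∀ d ∈ p.darts, R (f d.fst) (f d.snd) := by
  induction p with
  | nil => simp
  | cons h p ih =>
    rw [support_cons, List.map_cons, ← p.cons_tail_support, List.map_cons, List.isChain_cons_cons,
      ← List.map_cons, p.cons_tail_support, ih]
    simp [darts_cons]

theorem IsPath.append {u v w : V} {p : G.Walk u v} {q : G.Walk v w} (hp : p.IsPath)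
    (hq : q.IsPath) (h : ∀ x ∈ p.support, x ∈ q.support → x = v) : (p.append q).IsPath := by
  have hv : v ∉ q.support.tail := by
    have := hq.support_nodup
    rw [← cons_tail_support] at this
    exact (List.nodup_cons.1 this).1
  rw [isPath_def, support_append, List.nodup_append]
  refine ⟨hp.support_nodup, hq.support_nodup.sublist q.support.tail_sublist, ?_⟩
  rintro x hxp y hyq rfl
  exact hv (h x hxp (List.mem_of_mem_tail hyq) ▸ hyq)

variable {u v w : V}

theorem length_boxProdLeft (p : G.Walk u v) (b : W) : (p.boxProdLeft H b).length = p.length :=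
  p.length_map _

theorem length_boxProdRight {u v : W} (p : H.Walk u v) (a : V) :
    (p.boxProdRight G a).length = p.length :=
  p.length_map _

theorem support_boxProdLeft (p : G.Walk u v) (b : W) :
    (p.boxProdLeft H b).support = p.support.map (·, b) :=
  p.support_map _

theorem support_boxProdRight {u v : W} (p : H.Walk u v) (a : V) :
    (p.boxProdRight G a).support = p.support.map (a, ·) :=
  p.support_map _

theorem IsPath.boxProdLeft_append_boxProdRight {x y : W} {p : G.Walk u v} {q : H.Walk x y}
    (hp : p.IsPath) (hq : q.IsPath) : ((p.boxProdLeft H x).append (q.boxProdRight G v)).IsPath := by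
  have hp' : (p.boxProdLeft H x).IsPath := hp.map (G.boxProdLeft H x).injective
  have hq' : (q.boxProdRight G v).IsPath := hq.map (G.boxProdRight H v).injective
  refine hp'.append hq' ?_
  simp only [support_boxProdLeft, support_boxProdRight, List.mem_map]
  rintro _ ⟨a, -, rfl⟩ ⟨b, -, hb⟩
  obtain ⟨rfl, rfl⟩ := Prod.mk.inj hb
  rfl

variable [G.LocallyFinite]

def IsDegreeMonotone (p : G.Walk u v) : Prop :=
  ∀ d ∈ p.darts, G.degree d.fst ≤ G.degree d.snd

theorem isDegreeMonotone_iff_isChain (p : G.Walk u v) :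
    p.IsDegreeMonotone ↔ (p.support.map fun x => G.degree x).IsChain (· ≤ ·) :=
  (isChain_map_support_iff_forall_darts (fun x => G.degree x) p).symm

theorem isDegreeMonotone_reverse_iff_isChain (p : G.Walk u v) :
    p.reverse.IsDegreeMonotone ↔ (p.support.map fun x => G.degree x).IsChain (· ≥ ·) := by
  rw [isDegreeMonotone_iff_isChain, support_reverse, List.map_reverse, List.isChain_reverse]

theorem IsDegreeMonotone.append {p : G.Walk u v} {q : G.Walk v w} (hp : p.IsDegreeMonotone)
    (hq : q.IsDegreeMonotone) : (p.append q).IsDegreeMonotone := by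
  intro d hd
  rw [darts_append, List.mem_append] at hd
  exact hd.elim (hp d) (hq d)

theorem IsDegreeMonotone.map {V' : Type*} {G' : SimpleGraph V'} [G'.LocallyFinite]
    (f : G →g G') (hf : ∀ ⦃x y⦄, G.degree x ≤ G.degree y → G'.degree (f x) ≤ G'.degree (f y))
    {p : G.Walk u v} (hp : p.IsDegreeMonotone) : (p.map f).IsDegreeMonotone := by
  intro d hd
  rw [darts_map, List.mem_map] at hd
  obtain ⟨d, hd, rfl⟩ := hd
  exact hf (hp d hd)

variable [H.LocallyFinite]

theorem IsDegreeMonotone.boxProdLeft {p : G.Walk u v} (hp : p.IsDegreeMonotone) (b : W) :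
    (p.boxProdLeft H b).IsDegreeMonotone :=
  hp.map _ fun x y h => by
    rw [degree_boxProd, degree_boxProd]
    exact Nat.add_le_add_right h _

theorem IsDegreeMonotone.boxProdRight {u v : W} {p : H.Walk u v} (hp : p.IsDegreeMonotone)
    (a : V) : (p.boxProdRight G a).IsDegreeMonotone :=
  hp.map _ fun x y h => by
    rw [degree_boxProd, degree_boxProd]
    exact Nat.add_le_add_left h _

end Walk

section

variable (G) [G.LocallyFinite]

def degreeMonotonePathOrders : Set ℕ :=
  {n | ∃ (u v : V) (p : G.Walk u v), p.IsPath ∧ p.IsDegreeMonotone ∧ p.length + 1 = n}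

/- A path with nonincreasing degrees is one with nondecreasing degrees read backwards, and `mp`
fixes the classical `Fintype` instances on neighbour sets, which form a subsingleton. -/
theorem mp_eq_sSup_s17 [Fintype V] : mp G = sSup G.degreeMonotonePathOrders := by
  obtain rfl : ‹G.LocallyFinite› = letI := Classical.decRel G.Adj; fun _ => Subtype.fintype _ :=
    Subsingleton.elim _ _
  classical
  unfold mp
  congr 1
  ext n
  constructor
  · rintro ⟨u, v, p, hp, hmono | hmono, rfl⟩
    · exact ⟨u, v, p, hp, p.isDegreeMonotone_iff_isChain.2 hmono, p.length_support.symm⟩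
    · exact ⟨v, u, p.reverse, hp.reverse, p.isDegreeMonotone_reverse_iff_isChain.2 hmono,
        by simp⟩
  · rintro ⟨u, v, p, hp, hmono, rfl⟩
    exact ⟨u, v, p, hp, .inl (p.isDegreeMonotone_iff_isChain.1 hmono), p.length_support⟩

theorem bddAbove_degreeMonotonePathOrders [Fintype V] : BddAbove G.degreeMonotonePathOrders :=
  ⟨Fintype.card V, by
    rintro _ ⟨u, v, p, hp, -, rfl⟩
    exact hp.length_lt⟩

theorem exists_isPath_isDegreeMonotone_length_add_one_eq_mp [Fintype V] [Nonempty V] :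
    ∃ (u v : V) (p : G.Walk u v), p.IsPath ∧ p.IsDegreeMonotone ∧ p.length + 1 = mp G := by
  obtain ⟨u⟩ := ‹Nonempty V›
  have hne : G.degreeMonotonePathOrders.Nonempty :=
    ⟨1, u, u, .nil, .nil, by simp [Walk.IsDegreeMonotone], rfl⟩
  rw [mp_eq_sSup_s17]
  exact Nat.sSup_mem hne (bddAbove_degreeMonotonePathOrders G)

end

theorem Walk.IsPath.length_add_one_le_mp [Fintype V] [G.LocallyFinite] {u v : V}
    {p : G.Walk u v} (hp : p.IsPath) (hmono : p.IsDegreeMonotone) : p.length + 1 ≤ mp G := by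
  rw [mp_eq_sSup_s17]
  exact le_csSup (bddAbove_degreeMonotonePathOrders G) ⟨u, v, p, hp, hmono, rfl⟩

end SimpleGraph

theorem mp_boxProd_ge {V W : Type*} [Fintype V] [Fintype W]
    (G : SimpleGraph V) (H : SimpleGraph W) (hG : G.Connected) (hH : H.Connected) :
    mp G + mp H - 1 ≤ mp (G □ H) := by
  have : Nonempty V := hG.nonempty
  have : Nonempty W := hH.nonempty
  classical
  obtain ⟨u, v, p, hp, hpmono, hpmp⟩ := G.exists_isPath_isDegreeMonotone_length_add_one_eq_mp
  obtain ⟨w, x, q, hq, hqmono, hqmp⟩ := H.exists_isPath_isDegreeMonotone_length_add_one_eq_mp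
  have hlen := (hp.boxProdLeft_append_boxProdRight hq).length_add_one_le_mp
    ((hpmono.boxProdLeft w).append (hqmono.boxProdRight v))
  rw [Walk.length_append, Walk.length_boxProdLeft, Walk.length_boxProdRight] at hlen
  omega
end

section
/- For any two graphs G and H with disjoint vertex sets, mp(G + H) ≥ mp(G) + mp(H), where G + H is the join of G and H; moreover if G and H have equal numbers of vertices and the same degree sequence then mp(G + H) = |V(G)| + |V(H)|. -/
/-!
Reversing a path if necessary, `mp` is attained by a path with nondecreasing degrees. In `G + H`
every vertex of `G` is adjacent to every vertex of `H` and degrees are only shifted by a constant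
on each side, so merging two such paths of `G` and `H` by their degrees in `G + H` gives a degree
monotone path of `G + H` through both. If `|V(G)| = |V(H)|` and the degree sequences agree, list
`V(G)` as `v₁, …, vₙ` and `V(H)` as `w₁, …, wₙ` by increasing degree; then `vᵢ` and `wᵢ` have the
same degree in `G + H`, and `v₁ w₁ v₂ w₂ … vₙ wₙ` is a degree monotone Hamiltonian path.
-/

open SimpleGraph

/-- The join of two graphs on disjoint vertex sets. -/
def joinGraph {V W : Type*} (G : SimpleGraph V) (H : SimpleGraph W) :
    SimpleGraph (V ⊕ W) :=
  SimpleGraph.fromRel (fun a b =>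
    (∃ x y, a = Sum.inl x ∧ b = Sum.inl y ∧ G.Adj x y) ∨
    (∃ x y, a = Sum.inr x ∧ b = Sum.inr y ∧ H.Adj x y) ∨
    (∃ x y, a = Sum.inl x ∧ b = Sum.inr y))

namespace List

variable {α β γ : Type*}

theorem head?_merge_mem (le : α → α → Bool) {l₁ l₂ : List α} {y : α}
    (hy : y ∈ (l₁.merge l₂ le).head?) : y ∈ l₁.head? ∨ y ∈ l₂.head? := by
  cases l₁ with
  | nil => simp_all
  | cons a l₁ =>
    cases l₂ with
    | nil => simp_all
    | cons b l₂ =>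
      rw [cons_merge_cons] at hy
      split at hy <;> simp_all

theorem isChain_merge {R : α → α → Prop} (le : α → α → Bool) {l₁ l₂ : List α}
    (h₁ : l₁.IsChain R) (h₂ : l₂.IsChain R) (hR : ∀ a ∈ l₁, ∀ b ∈ l₂, R a b ∧ R b a) :
    (l₁.merge l₂ le).IsChain R := by
  induction l₁, l₂ using merge.induct le with
  | case1 l₂ => simpa using h₂
  | case2 l₁ => simpa using h₁
  | case3 a l₁ b l₂ hab ih =>
    rw [cons_merge_cons, if_pos hab, isChain_cons]
    refine ⟨fun y hy => ?_, ih h₁.tail h₂ fun x hx y hy => hR x (mem_cons_of_mem a hx) y hy⟩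
    rcases head?_merge_mem le hy with hy | hy
    · exact isChain_cons.mp h₁ |>.1 y hy
    · simp only [head?_cons, Option.mem_def, Option.some.injEq] at hy
      exact hy ▸ (hR a mem_cons_self b mem_cons_self).1
  | case4 a l₁ b l₂ hab ih =>
    rw [cons_merge_cons, if_neg hab, isChain_cons]
    refine ⟨fun y hy => ?_, ih h₁ h₂.tail fun x hx y hy => hR x hx y (mem_cons_of_mem b hy)⟩
    rcases head?_merge_mem le hy with hy | hy
    · simp only [head?_cons, Option.mem_def, Option.some.injEq] at hy
      exact hy ▸ (hR a mem_cons_self b mem_cons_self).2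
    · exact isChain_cons.mp h₂ |>.1 y hy

theorem nodup_map_inl_append_map_inr {l₁ : List α} {l₂ : List β} (h₁ : l₁.Nodup)
    (h₂ : l₂.Nodup) : (l₁.map Sum.inl ++ l₂.map Sum.inr).Nodup :=
  (h₁.map Sum.inl_injective).append (h₂.map Sum.inr_injective) (by simp [disjoint_left])

def interleaveSum : List α → List β → List (α ⊕ β)
  | a :: l₁, b :: l₂ => .inl a :: .inr b :: interleaveSum l₁ l₂
  | _, _ => []

theorem interleaveSum_perm : ∀ {l₁ : List α} {l₂ : List β}, l₁.length = l₂.length →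
    (interleaveSum l₁ l₂).Perm (l₁.map .inl ++ l₂.map .inr)
  | [], [], _ => by simp [interleaveSum]
  | a :: l₁, b :: l₂, h => by
    simpa [interleaveSum] using
      ((interleaveSum_perm (by simpa using h)).cons _).trans perm_middle.symm

theorem isChain_interleaveSum {R : α ⊕ β → α ⊕ β → Prop}
    (hR : ∀ a b, R (.inl a) (.inr b) ∧ R (.inr b) (.inl a)) :
    ∀ (l₁ : List α) (l₂ : List β), (interleaveSum l₁ l₂).IsChain R
  | a :: a' :: l₁, b :: b' :: l₂ => by
    simpa [interleaveSum, hR] using isChain_interleaveSum hR (a' :: l₁) (b' :: l₂)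
  | [a], b :: _ | a :: _, [b] => by simp [interleaveSum, hR]
  | [], _ | _ :: _, [] => by simp [interleaveSum]

theorem isChain_map_interleaveSum [Preorder γ] {f : α → γ} {g : β → γ} :
    ∀ {l₁ : List α} {l₂ : List β}, l₁.map f = l₂.map g → (l₁.map f).IsChain (· ≤ ·) →
      ((interleaveSum l₁ l₂).map (Sum.elim f g)).IsChain (· ≤ ·)
  | a :: a' :: l₁, b :: b' :: l₂, hfg, hl => by
    simp only [map_cons, cons.injEq] at hfg
    obtain ⟨hab, ha'b', hfg⟩ := hfg
    simp only [map_cons, isChain_cons_cons] at hl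
    have ih := isChain_map_interleaveSum (f := f) (g := g) (l₁ := a' :: l₁) (l₂ := b' :: l₂)
      (by simp [ha'b', hfg]) (by simpa using hl.2)
    simp only [interleaveSum, map_cons, Sum.elim_inl, Sum.elim_inr, isChain_cons_cons] at ih ⊢
    exact ⟨hab.le, hab ▸ hl.1, ih⟩
  | [a], b :: _, hfg, _ | a :: _, [b], hfg, _ => by
    simp_all [interleaveSum]
  | [], _, _, _ | _ :: _, [], _, _ => by simp [interleaveSum]

end List

section Join

variable {V W : Type*} (G : SimpleGraph V) (H : SimpleGraph W)

@[simp] theorem joinGraph_adj_inl_inl {x y : V} :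
    (joinGraph G H).Adj (.inl x) (.inl y) ↔ G.Adj x y := by
  simpa [joinGraph, G.adj_comm] using G.ne_of_adj

@[simp] theorem joinGraph_adj_inr_inr {x y : W} :
    (joinGraph G H).Adj (.inr x) (.inr y) ↔ H.Adj x y := by
  simpa [joinGraph, H.adj_comm] using H.ne_of_adj

@[simp] theorem joinGraph_adj_inl_inr (x : V) (y : W) : (joinGraph G H).Adj (.inl x) (.inr y) := by
  simp [joinGraph]

@[simp] theorem joinGraph_adj_inr_inl (x : W) (y : V) : (joinGraph G H).Adj (.inr x) (.inl y) :=
  (joinGraph_adj_inl_inr G H y x).symm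

variable [Fintype V] [Fintype W]

theorem degree_joinGraph_inl [DecidableRel G.Adj] [DecidableRel (joinGraph G H).Adj] (x : V) :
    (joinGraph G H).degree (.inl x) = G.degree x + Fintype.card W := by
  have : (joinGraph G H).neighborFinset (.inl x) = (G.neighborFinset x).disjSum .univ := by
    ext (y | y) <;> simp
  rw [← card_neighborFinset_eq_degree, this, Finset.card_disjSum, card_neighborFinset_eq_degree,
    Finset.card_univ]

theorem degree_joinGraph_inr [DecidableRel H.Adj] [DecidableRel (joinGraph G H).Adj] (x : W) :
    (joinGraph G H).degree (.inr x) = H.degree x + Fintype.card V := by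
  have : (joinGraph G H).neighborFinset (.inr x) =
      (Finset.univ.disjSum (H.neighborFinset x)) := by
    ext (y | y) <;> simp
  rw [← card_neighborFinset_eq_degree, this, Finset.card_disjSum, card_neighborFinset_eq_degree,
    Finset.card_univ, add_comm]

end Join

section DegreeAscendingPath

variable {V : Type*} [Fintype V] (G : SimpleGraph V) [DecidableRel G.Adj]

def IsDegreeAscendingPath (l : List V) : Prop :=
  l.Nodup ∧ l.IsChain G.Adj ∧ (l.map (G.degree ·)).IsChain (· ≤ ·)

def monotonePathLengths : Set ℕ :=
  {n | ∃ (u v : V) (p : G.Walk u v), p.IsPath ∧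
    ((p.support.map (G.degree ·)).IsChain (· ≤ ·) ∨ (p.support.map (G.degree ·)).IsChain (· ≥ ·)) ∧
    p.support.length = n}

/-- `mp` is defined with classical decidability instances; this replaces them by the given ones. -/
theorem mp_eq_sSup_monotonePathLengths : mp G = sSup (monotonePathLengths G) := by
  unfold mp monotonePathLengths
  congr!

theorem card_mem_upperBounds_monotonePathLengths :
    Fintype.card V ∈ upperBounds (monotonePathLengths G) :=
  fun _ ⟨_, _, _, hp, _, hn⟩ => hn ▸ hp.support_nodup.length_le_card

theorem mp_le_card : mp G ≤ Fintype.card V := by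
  rw [mp_eq_sSup_monotonePathLengths]
  exact csSup_le' (card_mem_upperBounds_monotonePathLengths G)

theorem IsDegreeAscendingPath.length_le_mp {l : List V} (hl : IsDegreeAscendingPath G l) :
    l.length ≤ mp G := by
  obtain rfl | hne := eq_or_ne l []
  · exact Nat.zero_le _
  obtain ⟨hnodup, hadj, hdeg⟩ := hl
  have hsupp := Walk.support_ofSupport hne hadj
  rw [mp_eq_sSup_monotonePathLengths]
  refine le_csSup ⟨_, card_mem_upperBounds_monotonePathLengths G⟩
    ⟨_, _, Walk.ofSupport l hne hadj, ?_, ?_, ?_⟩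
  · exact Walk.IsPath.mk' (by rwa [hsupp])
  · exact .inl (by rwa [hsupp])
  · rw [hsupp]

theorem exists_isDegreeAscendingPath_length_eq_mp :
    ∃ l, IsDegreeAscendingPath G l ∧ l.length = mp G := by
  rw [mp_eq_sSup_monotonePathLengths]
  obtain hS | hS := (monotonePathLengths G).eq_empty_or_nonempty
  · exact ⟨[], by simp [IsDegreeAscendingPath], by simp [hS]⟩
  obtain ⟨u, v, p, hp, hup | hdown, hlen⟩ :=
    Nat.sSup_mem hS ⟨_, card_mem_upperBounds_monotonePathLengths G⟩
  · exact ⟨p.support, ⟨hp.support_nodup, p.isChain_adj_support, hup⟩, hlen⟩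
  · refine ⟨p.support.reverse, ⟨List.nodup_reverse.mpr hp.support_nodup, ?_, ?_⟩,
      by simpa using hlen⟩
    · exact List.isChain_reverse.mpr (p.isChain_adj_support.imp fun _ _ h => h.symm)
    · exact List.map_reverse ▸ List.isChain_reverse.mpr hdown

end DegreeAscendingPath

section JoinPaths

variable {V W : Type*} [Fintype V] [Fintype W] {G : SimpleGraph V} {H : SimpleGraph W}
  [DecidableRel G.Adj] [DecidableRel H.Adj] [DecidableRel (joinGraph G H).Adj]

theorem IsDegreeAscendingPath.joinGraph_merge {l₁ : List V} {l₂ : List W}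
    (h₁ : IsDegreeAscendingPath G l₁) (h₂ : IsDegreeAscendingPath H l₂) :
    IsDegreeAscendingPath (joinGraph G H) ((l₁.map .inl).merge (l₂.map .inr)
      fun x y => (joinGraph G H).degree x ≤ (joinGraph G H).degree y) := by
  obtain ⟨hnodup₁, hadj₁, hdeg₁⟩ := h₁
  obtain ⟨hnodup₂, hadj₂, hdeg₂⟩ := h₂
  rw [List.isChain_iff_pairwise, List.pairwise_map] at hdeg₁ hdeg₂
  refine ⟨(List.merge_perm_append _).nodup_iff.mpr
    (List.nodup_map_inl_append_map_inr hnodup₁ hnodup₂), List.isChain_merge _ ?_ ?_ ?_, ?_⟩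
  · simpa [List.isChain_map] using hadj₁
  · simpa [List.isChain_map] using hadj₂
  · simp
  · rw [List.isChain_iff_pairwise, List.pairwise_map]
    simpa using List.pairwise_merge
      (le := fun x y => (joinGraph G H).degree x ≤ (joinGraph G H).degree y)
      (fun _ _ _ => by simpa using le_trans) (fun _ _ => by simpa using le_total _ _) _ _
      (by simpa [List.pairwise_map, degree_joinGraph_inl] using hdeg₁)
      (by simpa [List.pairwise_map, degree_joinGraph_inr] using hdeg₂)

theorem isDegreeAscendingPath_joinGraph_interleaveSum (hcard : Fintype.card V = Fintype.card W)
    {l₁ : List V} {l₂ : List W} (h₁ : l₁.Nodup) (h₂ : l₂.Nodup)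
    (hdeg : l₁.map (G.degree ·) = l₂.map (H.degree ·))
    (hsorted : (l₁.map (G.degree ·)).IsChain (· ≤ ·)) :
    IsDegreeAscendingPath (joinGraph G H) (l₁.interleaveSum l₂) := by
  have hlen : l₁.length = l₂.length := by simpa using congrArg List.length hdeg
  have hD : ((joinGraph G H).degree ·) =
      Sum.elim (G.degree · + Fintype.card W) (H.degree · + Fintype.card V) := by
    funext x
    cases x with
    | inl v => exact degree_joinGraph_inl G H v
    | inr w => exact degree_joinGraph_inr G H w
  refine ⟨(List.interleaveSum_perm hlen).nodup_iff.mpr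
    (List.nodup_map_inl_append_map_inr h₁ h₂), List.isChain_interleaveSum (by simp) _ _, ?_⟩
  rw [hD]
  apply List.isChain_map_interleaveSum
  · simpa [Function.comp_def, hcard] using congrArg (List.map (· + Fintype.card W)) hdeg
  · rw [List.isChain_map] at hsorted ⊢
    exact hsorted.imp fun _ _ h => Nat.add_le_add_right h _

end JoinPaths

theorem Fintype.exists_list_coe_eq_univ_sorted {α : Type*} [Fintype α] (f : α → ℕ) :
    ∃ l : List α, (l : Multiset α) = Finset.univ.val ∧ (l.map f).Pairwise (· ≤ ·) :=
  ⟨Finset.univ.toList.mergeSort (f · ≤ f ·),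
    by rw [Multiset.coe_eq_coe.mpr (List.mergeSort_perm _ _), Finset.coe_toList],
    by simpa [List.pairwise_map] using List.pairwise_mergeSort (le := (f · ≤ f ·))
        (fun _ _ _ => by simpa using le_trans) (fun _ _ => by simpa using le_total _ _) _⟩

theorem exists_isDegreeAscendingPath_joinGraph_length_eq_card {V W : Type*} [Fintype V]
    [Fintype W] {G : SimpleGraph V} {H : SimpleGraph W} [DecidableRel G.Adj] [DecidableRel H.Adj]
    [DecidableRel (joinGraph G H).Adj] (hcard : Fintype.card V = Fintype.card W)
    (hdeg : Finset.univ.val.map (G.degree ·) = Finset.univ.val.map (H.degree ·)) :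
    ∃ l, IsDegreeAscendingPath (joinGraph G H) l ∧ l.length = Fintype.card V + Fintype.card W := by
  obtain ⟨l₁, huniv₁, hsorted₁⟩ := Fintype.exists_list_coe_eq_univ_sorted (G.degree ·)
  obtain ⟨l₂, huniv₂, hsorted₂⟩ := Fintype.exists_list_coe_eq_univ_sorted (H.degree ·)
  have hmap : l₁.map (G.degree ·) = l₂.map (H.degree ·) := by
    refine List.Perm.eq_of_pairwise' hsorted₁ hsorted₂ ?_
    rwa [← Multiset.coe_eq_coe, ← Multiset.map_coe, ← Multiset.map_coe, huniv₁, huniv₂]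
  have hnodup₁ : l₁.Nodup := by simpa [← Multiset.coe_nodup, huniv₁] using Finset.univ.nodup
  have hnodup₂ : l₂.Nodup := by simpa [← Multiset.coe_nodup, huniv₂] using Finset.univ.nodup
  have hlen₁ : l₁.length = Fintype.card V := by simpa using congrArg Multiset.card huniv₁
  have hlen₂ : l₂.length = Fintype.card W := by simpa using congrArg Multiset.card huniv₂
  refine ⟨l₁.interleaveSum l₂, isDegreeAscendingPath_joinGraph_interleaveSum hcard hnodup₁
    hnodup₂ hmap hsorted₁.isChain, ?_⟩
  rw [(List.interleaveSum_perm (hlen₁.trans (hcard.trans hlen₂.symm))).length_eq]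
  simp [hlen₁, hlen₂]

theorem mp_join {V W : Type*} [Fintype V] [Fintype W]
    (G : SimpleGraph V) (H : SimpleGraph W)
    [DecidableRel G.Adj] [DecidableRel H.Adj] :
    mp G + mp H ≤ mp (joinGraph G H) ∧
    (Fintype.card V = Fintype.card W →
      Multiset.map (fun x => G.degree x) Finset.univ.val =
        Multiset.map (fun x => H.degree x) Finset.univ.val →
      mp (joinGraph G H) = Fintype.card V + Fintype.card W) := by
  classical
  refine ⟨?_, fun hcard hdeg => ?_⟩
  · obtain ⟨l₁, hl₁, hlen₁⟩ := exists_isDegreeAscendingPath_length_eq_mp G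
    obtain ⟨l₂, hl₂, hlen₂⟩ := exists_isDegreeAscendingPath_length_eq_mp H
    simpa [List.length_merge, hlen₁, hlen₂] using (hl₁.joinGraph_merge hl₂).length_le_mp
  · obtain ⟨l, hl, hlen⟩ := exists_isDegreeAscendingPath_joinGraph_length_eq_card hcard hdeg
    refine le_antisymm ?_ (hlen ▸ hl.length_le_mp)
    simpa using mp_le_card (joinGraph G H)
end
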